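/- arXiv:2408.06817 — 7 statements merged into one kernel-verified Lean document; each statement's English description precedes it below -/
import Mathlib

section
/- Let p be a prime. Then F_p(n) = ∑_{j=0}^{p-1} (p-j) · F_p(⌊(n+j)/p⌋) for every integer n ≥ 0, and F_p(j) = C(j+1, 2) = j(j+1)/2 for every j with 0 ≤ j ≤ p-1. -/
/-- `Fcount p n` = number of binomial coefficients `C(m,k)`, `0 ≤ k ≤ m < n`,
not divisible by `p`. -/
def Fcount (p n : ℕ) : ℕ :=
  ((Finset.range n ×ˢ Finset.range n).filter
    (fun mk => mk.2 ≤ mk.1 ∧ ¬ (p ∣ Nat.choose mk.1 mk.2))).card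

/-!
Counting row by row, `F_p(n) = ∑_{m<n} R(m)`, where `R(m) = rowCount p m` counts the entries
of row `m` of Pascal's triangle not divisible by `p`. By Lucas' theorem `p ∤ C(m, k)` iff
`k mod p ≤ m mod p` and `p ∤ C(⌊m/p⌋, ⌊k/p⌋)`, so `R(m) = R(⌊m/p⌋) · (m mod p + 1)`.
Both sides of the recurrence vanish at `n = 0`. Passing from `n` to `n + 1` adds `R(n)` on the
left; on the right only the term with `p ∣ n + j + 1`, i.e. `j = p - 1 - n mod p`, changes, and
it grows by `(n mod p + 1) · R(⌊n/p⌋) = R(n)`. Rows `m < p` contain no multiple of `p`, so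
`R(m) = m + 1` there, which gives the initial values.
-/

open Finset

def rowCount (p m : ℕ) : ℕ := #{k ∈ range (m + 1) | ¬ p ∣ m.choose k}

lemma Fcount_eq_sum_rowCount (p n : ℕ) : Fcount p n = ∑ m ∈ range n, rowCount p m := by
  rw [Fcount, card_filter, sum_product]
  refine sum_congr rfl fun m hm => ?_
  rw [rowCount, ← card_filter]
  congr 1
  ext k
  simp only [mem_filter, mem_range] at hm ⊢
  grind

lemma Fcount_zero (p : ℕ) : Fcount p 0 = 0 := by
  simp [Fcount_eq_sum_rowCount]

lemma Fcount_succ (p n : ℕ) : Fcount p (n + 1) = Fcount p n + rowCount p n := by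
  rw [Fcount_eq_sum_rowCount, Fcount_eq_sum_rowCount, sum_range_succ]

lemma Nat.Prime.not_dvd_choose_iff {p : ℕ} (hp : p.Prime) (m k : ℕ) :
    ¬ p ∣ m.choose k ↔ k % p ≤ m % p ∧ ¬ p ∣ (m / p).choose (k / p) := by
  have : Fact p.Prime := ⟨hp⟩
  rw [(Choose.choose_modEq_choose_mod_mul_choose_div_nat (p := p)).dvd_iff dvd_rfl, hp.dvd_mul]
  have hsmall : p ∣ (m % p).choose (k % p) ↔ m % p < k % p := by
    refine ⟨fun h => not_le.1 fun hle => ?_, fun h => by simp [Nat.choose_eq_zero_of_lt h]⟩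
    exact hp.coprime_iff_not_dvd.1 (hp.coprime_choose_of_lt (Nat.mod_lt _ hp.pos) hle) h
  rw [hsmall]
  omega

lemma rowCount_eq_mul {p : ℕ} (hp : p.Prime) (m : ℕ) :
    rowCount p m = rowCount p (m / p) * (m % p + 1) := by
  rw [rowCount, rowCount, ← card_range (m % p + 1), ← card_product]
  have hmod (s t : ℕ) (ht : t < p) : (s * p + t) % p = t ∧ (s * p + t) / p = s := by
    refine ⟨by rw [Nat.mul_add_mod', Nat.mod_eq_of_lt ht], ?_⟩
    rw [add_comm, Nat.add_mul_div_right _ _ hp.pos, Nat.div_eq_of_lt ht, zero_add]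
  have hm := Nat.mod_lt m hp.pos
  refine card_nbij' (fun k => (k / p, k % p)) (fun st => st.1 * p + st.2) ?_ ?_ ?_ ?_
  · intro k hk
    simp only [coe_filter, coe_product, coe_range, Set.mem_ofPred_eq, Set.mem_prod, Set.mem_Iio,
      mem_range, Nat.lt_succ_iff] at hk ⊢
    rw [hp.not_dvd_choose_iff] at hk
    exact ⟨⟨Nat.div_le_div_right hk.1, hk.2.2⟩, hk.2.1⟩
  · rintro ⟨s, t⟩ hst
    simp only [coe_filter, coe_product, coe_range, Set.mem_ofPred_eq, Set.mem_prod, Set.mem_Iio,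
      mem_range, Nat.lt_succ_iff] at hst ⊢
    rw [hp.not_dvd_choose_iff]
    obtain ⟨hmod, hdiv⟩ := hmod s t (by omega)
    refine ⟨?_, by rw [hmod, hdiv]; exact ⟨hst.2, hst.1.2⟩⟩
    calc s * p + t ≤ m / p * p + m % p := add_le_add (Nat.mul_le_mul_right p hst.1.1) hst.2
      _ = m := Nat.div_add_mod' m p
  · intro k _
    exact Nat.div_add_mod' k p
  · rintro ⟨s, t⟩ hst
    simp only [coe_product, coe_range, Set.mem_prod, Set.mem_Iio] at hst
    obtain ⟨hmod, hdiv⟩ := hmod s t (by omega)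
    simp only [hmod, hdiv]

lemma rowCount_of_lt {p m : ℕ} (hp : p.Prime) (hm : m < p) : rowCount p m = m + 1 := by
  rw [rowCount, filter_true_of_mem, card_range]
  intro k hk
  exact hp.coprime_iff_not_dvd.1 (hp.coprime_choose_of_lt hm (Nat.lt_succ_iff.1 (mem_range.1 hk)))

lemma Fcount_div_succ (p a : ℕ) :
    Fcount p ((a + 1) / p) = Fcount p (a / p) + if p ∣ a + 1 then rowCount p (a / p) else 0 := by
  rw [Nat.succ_div]
  split_ifs
  · exact Fcount_succ p (a / p)
  · rfl

lemma sum_range_sub_mul_ite_dvd {p : ℕ} (hp : 0 < p) (f : ℕ → ℕ) (n : ℕ) :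
    ∑ j ∈ range p, (p - j) * (if p ∣ n + j + 1 then f ((n + j) / p) else 0) =
      (n % p + 1) * f (n / p) := by
  have hn := Nat.div_add_mod n p
  have hr := Nat.mod_lt n hp
  rw [sum_eq_single (p - 1 - n % p)]
  · have hsum : n + (p - 1 - n % p) = p * (n / p) + (p - 1) := by omega
    have hdvd : p ∣ n + (p - 1 - n % p) + 1 := ⟨n / p + 1, by rw [hsum]; grind⟩
    rw [if_pos hdvd, hsum, Nat.mul_add_div hp, Nat.div_eq_of_lt (Nat.sub_lt hp one_pos), add_zero]
    congr 1
    omega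
  · intro j hj hne
    rw [mem_range] at hj
    rw [if_neg, mul_zero]
    intro hdvd
    have hsplit : n + j + 1 = p * (n / p) + (n % p + j + 1) := by omega
    rw [hsplit, Nat.dvd_add_right (dvd_mul_right p _)] at hdvd
    -- `0 < n % p + j + 1 < 2 * p`, so the only multiple of `p` it can be is `p` itself
    have heq := Nat.eq_of_dvd_of_lt_two_mul (by omega) hdvd (by omega)
    omega
  · intro h
    exact absurd (mem_range.2 (by omega)) h

lemma Fcount_eq_sum_div {p : ℕ} (hp : p.Prime) (n : ℕ) :
    Fcount p n = ∑ j ∈ range p, (p - j) * Fcount p ((n + j) / p) := by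
  induction n with
  | zero =>
    rw [Fcount_zero]
    refine (sum_eq_zero fun j hj => ?_).symm
    rw [zero_add, Nat.div_eq_of_lt (mem_range.1 hj), Fcount_zero, mul_zero]
  | succ n ih =>
    calc Fcount p (n + 1)
        = (∑ j ∈ range p, (p - j) * Fcount p ((n + j) / p)) +
            (n % p + 1) * rowCount p (n / p) := by
          rw [Fcount_succ, ih, rowCount_eq_mul hp, mul_comm]
      _ = ∑ j ∈ range p, (p - j) * (Fcount p ((n + j) / p) +
            if p ∣ n + j + 1 then rowCount p ((n + j) / p) else 0) := by
          rw [← sum_range_sub_mul_ite_dvd hp.pos, ← sum_add_distrib]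
          simp only [mul_add]
      _ = ∑ j ∈ range p, (p - j) * Fcount p ((n + 1 + j) / p) := by
          simp only [Nat.add_right_comm n 1, Fcount_div_succ]

lemma Fcount_eq_choose_two {p j : ℕ} (hp : p.Prime) (hj : j < p) :
    Fcount p j = (j + 1).choose 2 := by
  induction j with
  | zero => exact Fcount_zero p
  | succ j ih =>
    rw [Fcount_succ, ih (by omega), rowCount_of_lt hp (by omega), Nat.choose_succ_succ' (j + 1),
      Nat.choose_one_right, add_comm]

/-- For a prime `p`, `F_p` satisfies the recurrence
`F_p(n) = ∑_{j=0}^{p-1} (p-j) F_p(⌊(n+j)/p⌋)` for all `n ≥ 0`, with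
`F_p(j) = C(j+1,2)` for `0 ≤ j ≤ p-1`. -/
theorem Fcount_recurrence (p : ℕ) (hp : p.Prime) :
    (∀ n : ℕ, Fcount p n = ∑ j ∈ Finset.range p, (p - j) * Fcount p ((n + j) / p)) ∧
    (∀ j : ℕ, j ≤ p - 1 → Fcount p j = Nat.choose (j + 1) 2) :=
  ⟨Fcount_eq_sum_div hp, fun _ hj => Fcount_eq_choose_two hp (by have := hp.pos; omega)⟩
end

section
/- Let p be a prime. Then F_p(p·n) = C(p+1, 2) · F_p(n) for every integer n ≥ 1. -/
open Finset

/-- `k > m` needs no separate exclusion, since then `C(m, k) = 0`. -/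
lemma Fcount_eq_card_filter_not_dvd_choose (p n : ℕ) :
    Fcount p n = #{x ∈ range n ×ˢ range n | ¬ p ∣ x.1.choose x.2} := by
  unfold Fcount
  congr 1
  refine filter_congr fun x _ => and_iff_right_of_imp fun hndvd => ?_
  by_contra hlt
  exact hndvd (by rw [Nat.choose_eq_zero_of_lt (not_le.mp hlt)]; exact dvd_zero p)

theorem Nat.Prime.dvd_choose_iff_dvd_choose_div_or_dvd_choose_mod {p : ℕ} (hp : p.Prime)
    (m k : ℕ) : p ∣ m.choose k ↔ p ∣ (m / p).choose (k / p) ∨ p ∣ (m % p).choose (k % p) := by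
  have : Fact p.Prime := ⟨hp⟩
  rw [Nat.dvd_iff_mod_eq_zero, Choose.choose_modEq_choose_mod_mul_choose_div_nat,
    ← Nat.dvd_iff_mod_eq_zero, hp.dvd_mul, or_comm]

theorem Nat.Prime.dvd_choose_iff_lt {p b d : ℕ} (hp : p.Prime) (hb : b < p) :
    p ∣ b.choose d ↔ b < d := by
  refine ⟨fun hdvd => ?_, fun hlt => by rw [Nat.choose_eq_zero_of_lt hlt]; exact dvd_zero p⟩
  by_contra hle
  have hfact : p ∣ b.factorial := by
    rw [← Nat.choose_mul_factorial_mul_factorial (not_lt.mp hle), mul_assoc]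
    exact hdvd.mul_right _
  exact hb.not_ge (hp.dvd_factorial.mp hfact)

lemma card_filter_snd_le_fst_range (p : ℕ) :
    #{x ∈ range p ×ˢ range p | x.2 ≤ x.1} = (p + 1).choose 2 := by
  have hrow : ∀ b ∈ range p, #{d ∈ range p | d ≤ b} = b + 1 := fun b hb => by
    rw [← card_range (b + 1)]
    congr 1
    ext d
    simp only [mem_filter, mem_range] at hb ⊢
    omega
  rw [card_filter, sum_product]
  simp only [← card_filter]
  rw [sum_congr rfl hrow, Nat.choose_two_right, ← sum_range_id, sum_range_succ', add_zero]

lemma card_filter_range_mul_sq {p : ℕ} (hp : 0 < p) (n : ℕ) (P : ℕ × ℕ → Prop) [DecidablePred P]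
    (hP : ∀ m k, P (m, k) ↔ P (m / p, k / p) ∧ P (m % p, k % p)) :
    #{x ∈ range (p * n) ×ˢ range (p * n) | P x} =
      #{x ∈ range n ×ˢ range n | P x} * #{x ∈ range p ×ˢ range p | P x} := by
  have hdiv : ∀ a b, b < p → (p * a + b) / p = a := fun a b hb => by
    rw [Nat.mul_add_div hp, Nat.div_eq_of_lt hb, add_zero]
  have hmod : ∀ a b, b < p → (p * a + b) % p = b := fun a b hb => by
    rw [Nat.mul_add_mod, Nat.mod_eq_of_lt hb]
  have hlt : ∀ m, m < p * n ↔ m / p < n := fun m => by rw [Nat.div_lt_iff_lt_mul hp, mul_comm]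
  rw [← card_product, ← filter_product]
  refine card_nbij' (fun x => ((x.1 / p, x.2 / p), (x.1 % p, x.2 % p)))
    (fun y => (p * y.1.1 + y.2.1, p * y.1.2 + y.2.2)) ?_ ?_ ?_ ?_
  · rintro ⟨m, k⟩ hx
    simp only [coe_filter, mem_product, mem_range, Set.mem_ofPred_eq, hlt] at hx ⊢
    exact ⟨⟨hx.1, Nat.mod_lt _ hp, Nat.mod_lt _ hp⟩, (hP m k).mp hx.2⟩
  · rintro ⟨⟨a, c⟩, ⟨b, d⟩⟩ hy
    simp only [coe_filter, mem_product, mem_range, Set.mem_ofPred_eq] at hy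
    obtain ⟨⟨⟨ha, hc⟩, hb, hd⟩, hPac, hPbd⟩ := hy
    simp only [coe_filter, mem_product, mem_range, Set.mem_ofPred_eq, hlt, hdiv _ _ hb,
      hdiv _ _ hd]
    refine ⟨⟨ha, hc⟩, (hP _ _).mpr ?_⟩
    rw [hdiv _ _ hb, hdiv _ _ hd, hmod _ _ hb, hmod _ _ hd]
    exact ⟨hPac, hPbd⟩
  · rintro ⟨m, k⟩ -
    simp only [Nat.div_add_mod]
  · rintro ⟨⟨a, c⟩, ⟨b, d⟩⟩ hy
    simp only [coe_filter, mem_product, mem_range, Set.mem_ofPred_eq] at hy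
    obtain ⟨⟨-, hb, hd⟩, -⟩ := hy
    simp only [hdiv _ _ hb, hdiv _ _ hd, hmod _ _ hb, hmod _ _ hd]

theorem Fcount_mul_p_general (p : ℕ) (hp : p.Prime) (n : ℕ) :
    Fcount p (p * n) = Nat.choose (p + 1) 2 * Fcount p n := by
  have hdigits : #{x ∈ range p ×ˢ range p | ¬ p ∣ x.1.choose x.2} = (p + 1).choose 2 := by
    rw [← card_filter_snd_le_fst_range p]
    refine congrArg card (filter_congr fun x hx => ?_)
    rw [hp.dvd_choose_iff_lt (mem_range.mp (mem_product.mp hx).1), not_lt]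
  have hlucas : ∀ m k, ¬ p ∣ m.choose k ↔
      ¬ p ∣ (m / p).choose (k / p) ∧ ¬ p ∣ (m % p).choose (k % p) := fun m k =>
    (not_congr (hp.dvd_choose_iff_dvd_choose_div_or_dvd_choose_mod m k)).trans not_or
  rw [Fcount_eq_card_filter_not_dvd_choose, Fcount_eq_card_filter_not_dvd_choose,
    card_filter_range_mul_sq hp.pos n (fun x => ¬ p ∣ x.1.choose x.2) hlucas, hdigits, mul_comm]

/-- For a prime `p`, `F_p(p·n) = C(p+1,2) · F_p(n)` for every `n ≥ 1`. -/
theorem Fcount_mul_p (p : ℕ) (hp : p.Prime) (n : ℕ) (hn : 1 ≤ n) :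
    Fcount p (p * n) = Nat.choose (p + 1) 2 * Fcount p n :=
  Fcount_mul_p_general p hp n
end

section
/- Let p be an odd prime and let ξ, η be integers with 1 ≤ ξ < p and 0 ≤ η ≤ (p−1)/2. Then φ_p(ŝ_p(ξ,η)) = ((ξ+1)/(2A_p)) · (ξ + (p−2η)(p−2η+1)/(2p(p+1))). -/
open Finset

/-- `A_p = C(p+1,2) = p(p+1)/2`. -/
noncomputable def Ap (p : ℕ) : ℝ := p * (p + 1) / 2

/-- `ρ_p = log_p A_p`. -/
noncomputable def rhoP (p : ℕ) : ℝ := Real.log (Ap p) / Real.log p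

/-- `bdig p x j` is the `j`-th base-`p` digit (`j ≥ 1`) of `x ∈ [0,1)`:
`⌊p^j x⌋ − p ⌊p^{j-1} x⌋`. -/
noncomputable def bdig (p : ℕ) (x : ℝ) (j : ℕ) : ℤ :=
  ⌊(p : ℝ) ^ j * x⌋ - p * ⌊(p : ℝ) ^ (j - 1) * x⌋

/-- `φ_p(x) = (1/2) ∑_{j≥1} A_p^{-j} b_j(x) ∏_{i=1}^{j} (b_i(x)+1)` for `x ∈ [0,1)`,
with `φ_p(1) = 1`. -/
noncomputable def phiP (p : ℕ) (x : ℝ) : ℝ :=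
  if x = 1 then 1 else
    (1 / 2) * ∑' j : ℕ,
      ((bdig p x (j + 1) : ℝ) * ∏ i ∈ Finset.range (j + 1), ((bdig p x (i + 1) : ℝ) + 1))
        / (Ap p) ^ (j + 1)

/-- `G_p(s) = s^{-ρ_p} φ_p(s)`. -/
noncomputable def Gp (p : ℕ) (s : ℝ) : ℝ := s ^ (-(rhoP p)) * phiP p s

/-- `β_p = liminf_{n→∞} F_p(n) / n^{ρ_p}`. -/
noncomputable def betaP (p : ℕ) : ℝ :=
  Filter.atTop.liminf (fun n : ℕ => (Fcount p n : ℝ) / (n : ℝ) ^ (rhoP p))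

/-- `ŝ_p(ξ,η) = (2ξ+1)/(2p) − η/p²`. -/
noncomputable def shatP (p ξ η : ℕ) : ℝ := (2 * ξ + 1) / (2 * p) - η / (p : ℝ) ^ 2

/-! The base-`p` digits of `ŝ_p(ξ,η)` are `ξ, c, m, m, m, …` with `p = 2m + 1` and `c = m - η`:
indeed `ŝ_p(ξ,η) = (ξ + (c + 1/2)/p)/p`, and `1/2 = (m + 1/2)/p` has all digits equal to `m`.
Since `A_p = p (m + 1)`, the series defining `φ_p` is geometric with ratio `1/p` from its third
term on, and summing it gives the closed form. -/

section Digits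

variable {p : ℕ}

lemma natCast_add_div_mem_Ico {d : ℕ} {y : ℝ} (hd : d < p) (hy : y ∈ Set.Ico (0 : ℝ) 1) :
    ((d : ℝ) + y) / p ∈ Set.Ico (0 : ℝ) 1 := by
  have hp : (0 : ℝ) < p := by exact_mod_cast (Nat.zero_le d).trans_lt hd
  have hd' : (d : ℝ) + 1 ≤ p := by exact_mod_cast hd
  refine ⟨by have := hy.1; positivity, (div_lt_one hp).2 ?_⟩
  linarith [hy.2]

lemma bdig_natCast_add_div_one {d : ℕ} {y : ℝ} (hd : d < p) (hy : y ∈ Set.Ico (0 : ℝ) 1) :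
    bdig p (((d : ℝ) + y) / p) 1 = d := by
  have hp : (p : ℝ) ≠ 0 := by exact_mod_cast (Nat.zero_le d).trans_lt hd |>.ne'
  have hfloor : ⌊((d : ℝ) + y) / p⌋ = 0 :=
    Int.floor_eq_zero_iff.2 (natCast_add_div_mem_Ico hd hy)
  rw [bdig, pow_one, mul_div_cancel₀ _ hp, Nat.sub_self, pow_zero, one_mul, hfloor,
    Int.floor_natCast_add, Int.floor_eq_zero_iff.2 hy]
  ring

lemma bdig_natCast_add_div_add_two (hp : p ≠ 0) (d : ℕ) (y : ℝ) (j : ℕ) :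
    bdig p (((d : ℝ) + y) / p) (j + 2) = bdig p y (j + 1) := by
  have hp' : (p : ℝ) ≠ 0 := by exact_mod_cast hp
  have hshift : ∀ k : ℕ, (p : ℝ) ^ (k + 1) * (((d : ℝ) + y) / p)
      = ((d * p ^ k : ℕ) : ℝ) + (p : ℝ) ^ k * y := by
    intro k
    push_cast
    field_simp
    ring
  show bdig p _ (j + 1 + 1) = _
  simp only [bdig, Nat.add_sub_cancel, hshift, Int.floor_natCast_add]
  push_cast
  ring

lemma bdig_half {m : ℕ} (hp : p = 2 * m + 1) (j : ℕ) : bdig p (1 / 2) (j + 1) = m := by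
  have hhalf : (1 / 2 : ℝ) = ((m : ℝ) + 1 / 2) / p := by
    rw [hp]
    push_cast
    field_simp
  have hmem : (1 / 2 : ℝ) ∈ Set.Ico 0 1 := by norm_num
  induction j with
  | zero =>
    conv_lhs => rw [hhalf]
    exact bdig_natCast_add_div_one (by omega) hmem
  | succ j ih =>
    conv_lhs => rw [hhalf]
    rw [bdig_natCast_add_div_add_two (by omega), ih]

end Digits

lemma hasSum_digitSeries {A m r : ℝ} (b : ℕ → ℝ) (hb : ∀ k, b (k + 2) = m) (hA : A ≠ 0)
    (hmr : m + 1 = r * A) (hr : ‖r‖ < 1) :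
    HasSum (fun j => (b j * ∏ i ∈ range (j + 1), (b i + 1)) / A ^ (j + 1))
      (b 0 * (b 0 + 1) / A + b 1 * ((b 0 + 1) * (b 1 + 1)) / A ^ 2
        + m * ((b 0 + 1) * (b 1 + 1)) / A ^ 2 * r * (1 - r)⁻¹) := by
  set C := m * ((b 0 + 1) * (b 1 + 1)) / A ^ 2
  have htail : ∀ k : ℕ, (b (k + 2) * ∏ i ∈ range (k + 2 + 1), (b i + 1)) / A ^ (k + 2 + 1)
      = C * r ^ (k + 1) := by
    intro k
    have hprod :
        ∏ i ∈ range (2 + (k + 1)), (b i + 1) = (b 0 + 1) * (b 1 + 1) * (m + 1) ^ (k + 1) := by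
      rw [prod_range_add, prod_range_succ, prod_range_one]
      simp only [add_comm 2, hb, prod_const, card_range]
    rw [show k + 2 + 1 = 2 + (k + 1) by ring, hprod, hb, hmr, mul_pow, pow_add]
    simp only [C]
    field_simp
    ring
  have hgeom : HasSum (fun k : ℕ => C * r ^ (k + 1)) (C * r * (1 - r)⁻¹) :=
    ((hasSum_geometric_of_norm_lt_one hr).mul_left (C * r)).congr_fun fun k => by ring
  have hhead : ∑ j ∈ range 2, (b j * ∏ i ∈ range (j + 1), (b i + 1)) / A ^ (j + 1)
      = b 0 * (b 0 + 1) / A + b 1 * ((b 0 + 1) * (b 1 + 1)) / A ^ 2 := by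
    simp [sum_range_succ, prod_range_succ]
  rw [← hasSum_nat_add_iff' 2, hhead, add_sub_cancel_left]
  exact hgeom.congr_fun htail

theorem phiP_shat_general (p : ℕ) (hodd : Odd p) (ξ η : ℕ)
    (hξ1 : 1 ≤ ξ) (hξp : ξ < p) (hη : 2 * η ≤ p - 1) :
    phiP p (shatP p ξ η) =
      ((ξ : ℝ) + 1) / (2 * Ap p) *
        ((ξ : ℝ) + ((p : ℝ) - 2 * η) * ((p : ℝ) - 2 * η + 1) / (2 * p * (p + 1))) := by
  obtain ⟨m, hm⟩ := hodd
  have hp0 : p ≠ 0 := by omega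
  have hpR : (p : ℝ) = 2 * m + 1 := by exact_mod_cast hm
  have hm1 : (1 : ℝ) ≤ m := by exact_mod_cast (show 1 ≤ m by omega)
  have hm0 : (m : ℝ) ≠ 0 := by positivity
  have hcR : ((m - η : ℕ) : ℝ) = m - η := Nat.cast_sub (by omega)
  have hy : (((m - η : ℕ) : ℝ) + 1 / 2) / p ∈ Set.Ico 0 1 :=
    natCast_add_div_mem_Ico (by omega) (by norm_num)
  have hs : shatP p ξ η = ((ξ : ℝ) + (((m - η : ℕ) : ℝ) + 1 / 2) / p) / p := by
    rw [shatP, hcR, hpR]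
    field_simp
    ring
  have hs1 : shatP p ξ η ≠ 1 := (hs ▸ natCast_add_div_mem_Ico hξp hy).2.ne
  have hb0 : bdig p (shatP p ξ η) 1 = ξ := hs ▸ bdig_natCast_add_div_one hξp hy
  have hb1 : bdig p (shatP p ξ η) 2 = (m - η : ℕ) := by
    rw [hs, bdig_natCast_add_div_add_two hp0 _ _ 0]
    exact bdig_natCast_add_div_one (by omega) (by norm_num)
  have hb : ∀ k, (bdig p (shatP p ξ η) (k + 2 + 1) : ℝ) = m := fun k => by
    rw [hs, bdig_natCast_add_div_add_two hp0, show k + 1 + 1 = k + 2 from rfl,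
      bdig_natCast_add_div_add_two hp0, bdig_half hm, Int.cast_natCast]
  have hA : Ap p ≠ 0 := by rw [Ap]; positivity
  have hmA : (m : ℝ) + 1 = 1 / p * Ap p := by rw [Ap, hpR]; field_simp; ring
  have hr : ‖(1 / p : ℝ)‖ < 1 := by
    rw [Real.norm_of_nonneg (by positivity), hpR, div_lt_one (by positivity)]
    linarith
  rw [phiP, if_neg hs1, (hasSum_digitSeries _ hb hA hmA hr).tsum_eq, hb0, hb1]
  push_cast [Ap, hcR, hpR]
  field_simp
  ring

/-- For an odd prime `p` and `1 ≤ ξ < p`, `0 ≤ η ≤ (p−1)/2`: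
`φ_p(ŝ_p(ξ,η)) = ((ξ+1)/(2A_p)) (ξ + (p−2η)(p−2η+1)/(2p(p+1)))`. -/
theorem phiP_shat (p : ℕ) (hp : p.Prime) (hodd : Odd p) (ξ η : ℕ)
    (hξ1 : 1 ≤ ξ) (hξp : ξ < p) (hη : 2 * η ≤ p - 1) :
    phiP p (shatP p ξ η) =
      ((ξ : ℝ) + 1) / (2 * Ap p) *
        ((ξ : ℝ) + ((p : ℝ) - 2 * η) * ((p : ℝ) - 2 * η + 1) / (2 * p * (p + 1))) :=
  phiP_shat_general p hodd ξ η hξ1 hξp hη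
end

section
/- Let p be an odd prime and let ξ, η be integers with 1 ≤ ξ < p and 0 ≤ η ≤ (p−1)/2. Then G_p(ŝ_p(ξ,η)) = B_{ξ,η}, where B_{ξ,η} := C(ξ+1, 2) · (1 + (p−2η)(p−2η+1)/(2ξp(p+1))) · ((2ξ+1)/2 − η/p)^{−ρ_p}. -/
open Finset

/-- `B_{ξ,η} = C(ξ+1,2) (1 + (p−2η)(p−2η+1)/(2ξp(p+1))) ((2ξ+1)/2 − η/p)^{−ρ_p}`. -/
noncomputable def Bval (p ξ η : ℕ) : ℝ :=
  (Nat.choose (ξ + 1) 2 : ℝ) *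
    (1 + ((p : ℝ) - 2 * η) * ((p : ℝ) - 2 * η + 1) / (2 * ξ * p * (p + 1))) *
    ((2 * ξ + 1) / 2 - (η : ℝ) / p) ^ (-(rhoP p))

/-!
For `p = 2c + 1` we have `ŝ_p(ξ, η) = (ξ + (c - η + 1/2)/p)/p`, and `1/2 = 0.cc…` in base `p`
(it is the fixed point of `y ↦ fract (p y)`), so the base-`p` digits of `ŝ_p(ξ, η)` are
`ξ, c - η, c, c, …`. From the third term on, the series defining `φ_p` is therefore geometric
with ratio `(c + 1)/A_p = 1/p`, and `ŝ_p(ξ, η)^{-ρ_p} = A_p ((2ξ+1)/2 - η/p)^{-ρ_p}` because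
`p^{ρ_p} = A_p`.
-/

theorem Int.floor_natCast_add_half (n : ℕ) : ⌊(n : ℝ) + 1 / 2⌋ = n := by
  rw [Int.floor_natCast_add, Int.floor_eq_zero_iff.mpr ⟨by norm_num, by norm_num⟩, add_zero]

theorem Int.fract_natCast_add_half (n : ℕ) : Int.fract ((n : ℝ) + 1 / 2) = 1 / 2 := by
  rw [Int.fract_natCast_add, Int.fract_eq_self]
  norm_num

theorem Int.fract_natCast_mul_fract (n : ℕ) (y : ℝ) :
    Int.fract ((n : ℝ) * Int.fract y) = Int.fract (n * y) := by
  rw [← Int.self_sub_floor y, mul_sub, ← Int.fract_add_intCast _ (n * ⌊y⌋)]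
  push_cast
  ring_nf

theorem bdig_succ_eq_floor_mul_fract (p : ℕ) (x : ℝ) (j : ℕ) :
    bdig p x (j + 1) = ⌊(p : ℝ) * Int.fract ((p : ℝ) ^ j * x)⌋ := by
  have hsplit : (p : ℝ) ^ (j + 1) * x
      = ((p * ⌊(p : ℝ) ^ j * x⌋ : ℤ) : ℝ) + p * Int.fract ((p : ℝ) ^ j * x) := by
    rw [← Int.self_sub_floor]
    push_cast
    ring
  rw [bdig, Nat.add_sub_cancel, hsplit, Int.floor_intCast_add]
  ring

section DigitSeries

variable {A a b d : ℝ} {f : ℕ → ℝ}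

theorem prod_range_add_three_of_eventually_const (h1 : f 1 = a) (h2 : f 2 = b)
    (h3 : ∀ j, f (j + 3) = d) (j : ℕ) :
    ∏ i ∈ range (j + 3), (f (i + 1) + 1) = (a + 1) * (b + 1) * (d + 1) ^ (j + 1) := by
  induction j with
  | zero => simp [prod_range_succ, h1, h2, h3 0]
  | succ j ih => rw [prod_range_succ, ih, h3]; ring

theorem hasSum_digit_series_of_eventually_const (hA : A ≠ 0) (hr : |(d + 1) / A| < 1)
    (h1 : f 1 = a) (h2 : f 2 = b) (h3 : ∀ j, f (j + 3) = d) :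
    HasSum (fun j => (f (j + 1) * ∏ i ∈ range (j + 1), (f (i + 1) + 1)) / A ^ (j + 1))
      (a * (a + 1) / A + b * ((a + 1) * (b + 1)) / A ^ 2
        + d * (a + 1) * (b + 1) * (d + 1) / A ^ 3 * (1 - (d + 1) / A)⁻¹) := by
  set F : ℕ → ℝ := fun j => (f (j + 1) * ∏ i ∈ range (j + 1), (f (i + 1) + 1)) / A ^ (j + 1)
  set C := d * (a + 1) * (b + 1) * (d + 1) / A ^ 3
  have htail : ∀ j, F (j + 2) = C * ((d + 1) / A) ^ j := by
    intro j
    simp only [F, C]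
    rw [prod_range_add_three_of_eventually_const h1 h2 h3, h3, div_pow]
    field_simp
    ring
  have hgeom : HasSum (fun j => F (j + 2)) (C * (1 - (d + 1) / A)⁻¹) := by
    simpa only [htail] using (hasSum_geometric_of_abs_lt_one hr).mul_left C
  have hhead : ∑ i ∈ range 2, F i = a * (a + 1) / A + b * ((a + 1) * (b + 1)) / A ^ 2 := by
    simp [F, sum_range_succ, prod_range_succ, h1, h2]
  have hsum := (hasSum_nat_add_iff 2).mp hgeom
  rwa [hhead, add_comm] at hsum

end DigitSeries

section OddBase

variable {p c : ℕ}

theorem fract_natCast_mul_of_fract_eq_half (hpc : p = 2 * c + 1) {y : ℝ}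
    (hy : Int.fract y = 1 / 2) : Int.fract ((p : ℝ) * y) = 1 / 2 := by
  have hp : (p : ℝ) * (1 / 2) = c + 1 / 2 := by rw [hpc]; push_cast; ring
  rw [← Int.fract_natCast_mul_fract, hy, hp, Int.fract_natCast_add_half]

variable {a m : ℕ} {x : ℝ}

theorem fract_pow_add_two_mul (hpc : p = 2 * c + 1) (hx : x = (a + (m + 1 / 2) / p) / p)
    (j : ℕ) : Int.fract ((p : ℝ) ^ (j + 2) * x) = 1 / 2 := by
  have hp : (p : ℝ) ≠ 0 := by rw [hpc]; positivity
  induction j with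
  | zero =>
    have h : (p : ℝ) ^ 2 * x = ((a * p + m : ℕ) : ℝ) + 1 / 2 := by
      rw [hx]; field_simp; push_cast; ring
    rw [h, Int.fract_natCast_add_half]
  | succ j ih =>
    rw [pow_succ', mul_assoc]
    exact fract_natCast_mul_of_fract_eq_half hpc ih

theorem floor_fract_natCast_mul_of_eq (hx : x = (a + (m + 1 / 2) / p) / p) (hm : m < p) :
    ⌊(p : ℝ) * x⌋ = a ∧ Int.fract ((p : ℝ) * x) = (m + 1 / 2) / p := by
  have hp : (0 : ℝ) < p := Nat.cast_pos.mpr (by omega)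
  have hmp : (m : ℝ) + 1 ≤ p := by exact_mod_cast hm
  have hpx : (p : ℝ) * x = a + (m + 1 / 2) / p := by rw [hx]; field_simp
  have hsmall : 0 ≤ ((m : ℝ) + 1 / 2) / p ∧ ((m : ℝ) + 1 / 2) / p < 1 :=
    ⟨by positivity, by rw [div_lt_one hp]; linarith⟩
  rw [hpx, Int.floor_natCast_add, Int.floor_eq_zero_iff.mpr hsmall, Int.fract_natCast_add,
    Int.fract_eq_self.mpr hsmall]
  simp

theorem floor_eq_zero_of_eq (hx : x = (a + (m + 1 / 2) / p) / p) (ha : a < p) (hm : m < p) :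
    ⌊x⌋ = 0 := by
  have hp : (0 : ℝ) < p := Nat.cast_pos.mpr (by omega)
  have hap : (a : ℝ) + 1 ≤ p := by exact_mod_cast ha
  have hmp : (m : ℝ) + 1 ≤ p := by exact_mod_cast hm
  rw [Int.floor_eq_zero_iff, hx]
  constructor
  · positivity
  · rw [div_lt_one hp, ← lt_sub_iff_add_lt', div_lt_iff₀ hp]
    nlinarith

theorem bdig_one_of_eq (hx : x = (a + (m + 1 / 2) / p) / p) (ha : a < p) (hm : m < p) :
    bdig p x 1 = a := by
  rw [bdig, Nat.sub_self, pow_zero, one_mul, floor_eq_zero_of_eq hx ha hm, pow_one,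
    (floor_fract_natCast_mul_of_eq hx hm).1]
  simp

theorem bdig_two_of_eq (hx : x = (a + (m + 1 / 2) / p) / p) (hm : m < p) :
    bdig p x 2 = m := by
  have hp : (p : ℝ) ≠ 0 := Nat.cast_ne_zero.mpr (by omega)
  rw [bdig_succ_eq_floor_mul_fract, pow_one, (floor_fract_natCast_mul_of_eq hx hm).2,
    mul_div_cancel₀ _ hp, Int.floor_natCast_add_half]

theorem bdig_add_three_of_eq (hpc : p = 2 * c + 1) (hx : x = (a + (m + 1 / 2) / p) / p)
    (j : ℕ) : bdig p x (j + 3) = c := by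
  rw [bdig_succ_eq_floor_mul_fract, fract_pow_add_two_mul hpc hx,
    show (p : ℝ) * (1 / 2) = c + 1 / 2 by rw [hpc]; push_cast; ring, Int.floor_natCast_add_half]

theorem phiP_of_eq (hpc : p = 2 * c + 1) (hc : 0 < c) (hx : x = (a + (m + 1 / 2) / p) / p)
    (ha : a < p) (hm : m < p) :
    phiP p x = (a * (a + 1) + (a + 1) * (m + 1) * (2 * m + 1) / (2 * Ap p)) / (2 * Ap p) := by
  have hP : (p : ℝ) = 2 * c + 1 := by rw [hpc]; push_cast; ring
  have hc' : (0 : ℝ) < c := Nat.cast_pos.mpr hc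
  have hA : Ap p = (2 * c + 1) * (c + 1) := by rw [Ap, hP]; ring
  have hA0 : Ap p ≠ 0 := by rw [hA]; positivity
  have hratio : |((c : ℝ) + 1) / Ap p| < 1 := by
    rw [hA, abs_of_pos (by positivity), div_lt_one (by positivity)]
    nlinarith
  have hx1 : x ≠ 1 := fun h => by simpa [h] using floor_eq_zero_of_eq hx ha hm
  have hsum := hasSum_digit_series_of_eventually_const (f := fun i => (bdig p x i : ℝ))
    (a := a) (b := m) (d := c) hA0 hratio (by simp [bdig_one_of_eq hx ha hm])
    (by simp [bdig_two_of_eq hx hm])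
    (fun j => by simp [bdig_add_three_of_eq hpc hx j])
  rw [phiP, if_neg hx1, hsum.tsum_eq, hA]
  field_simp
  ring

end OddBase

theorem rpow_rhoP {p : ℕ} (hp : 1 < p) : (p : ℝ) ^ rhoP p = Ap p := by
  have hp' : (1 : ℝ) < p := by exact_mod_cast hp
  exact Real.rpow_logb (by positivity) hp'.ne' (by rw [Ap]; positivity)

theorem div_rpow_neg_rhoP {p : ℕ} (hp : 1 < p) {t : ℝ} (ht : 0 ≤ t) :
    (t / p) ^ (-rhoP p) = t ^ (-rhoP p) * Ap p := by
  rw [Real.div_rpow ht (Nat.cast_nonneg p), Real.rpow_neg (Nat.cast_nonneg p), rpow_rhoP hp,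
    div_inv_eq_mul]

theorem Gp_shat_general (p : ℕ) (hodd : Odd p) (ξ η : ℕ)
    (hξ1 : 1 ≤ ξ) (hξp : ξ < p) (hη : 2 * η ≤ p - 1) :
    Gp p (shatP p ξ η) = Bval p ξ η := by
  obtain ⟨c, hpc⟩ := hodd
  have hP : (p : ℝ) = 2 * c + 1 := by rw [hpc]; push_cast; ring
  have hηc : (η : ℝ) ≤ c := by exact_mod_cast (show η ≤ c by omega)
  have hξ : (1 : ℝ) ≤ ξ := by exact_mod_cast hξ1
  have hshat : shatP p ξ η = (ξ + ((c - η : ℕ) + 1 / 2) / p) / p := by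
    rw [shatP, Nat.cast_sub (by omega), hP]
    field_simp
    ring
  have hshat' : shatP p ξ η = ((2 * ξ + 1) / 2 - η / p) / p := by
    rw [shatP, hP]
    field_simp
  have ht : (0 : ℝ) ≤ (2 * ξ + 1) / 2 - η / p := by
    rw [hP, sub_nonneg, div_le_iff₀ (by positivity)]
    nlinarith
  rw [Gp, phiP_of_eq hpc (by omega) hshat hξp (by omega), hshat', div_rpow_neg_rhoP (by omega) ht,
    Bval]
  generalize ((2 * ξ + 1) / 2 - η / p : ℝ) ^ (-rhoP p) = r
  rw [Nat.cast_choose_two, Nat.cast_sub (by omega), Ap, hP]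
  push_cast
  field_simp
  ring

/-- For an odd prime `p` and `1 ≤ ξ < p`, `0 ≤ η ≤ (p−1)/2`:
`G_p(ŝ_p(ξ,η)) = B_{ξ,η}`. -/
theorem Gp_shat (p : ℕ) (hp : p.Prime) (hodd : Odd p) (ξ η : ℕ)
    (hξ1 : 1 ≤ ξ) (hξp : ξ < p) (hη : 2 * η ≤ p - 1) :
    Gp p (shatP p ξ η) = Bval p ξ η :=
  Gp_shat_general p hodd ξ η hξ1 hξp hη
end

section
/- Let p be an odd prime, and fix integers M ≥ 1 and 1 ≤ m < p^M. Then for every integer k ≥ 0 and every t ∈ [0,1], p^k · (φ_p(θ_k(t)) − φ_p(μ)) = τ_M · (φ_p(t) − φ_p(1/2)). -/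
open Finset

/-- `adig p m M i` is the digit `a_i` (for `1 ≤ i ≤ M`) in the base-`p` expansion
`m = a_1 p^{M-1} + ⋯ + a_{M-1} p + a_M`. -/
def adig (p m M i : ℕ) : ℕ := m / p ^ (M - i) % p

/-- `τ_M = (∏_{i=1}^M (1 + a_i)) / A_p^M`. -/
noncomputable def tauM (p m M : ℕ) : ℝ :=
  (∏ i ∈ Finset.Icc 1 M, ((adig p m M i : ℝ) + 1)) / (Ap p) ^ M

/-- `μ = (m + 1/2)/p^M`. -/
noncomputable def muP (p m M : ℕ) : ℝ := ((m : ℝ) + 1 / 2) / (p : ℝ) ^ M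

/-- `θ_k(t) = m/p^M + ∑_{j=M+1}^{M+k} (p−1)/(2p^j) + t/p^{M+k}`. -/
noncomputable def thetaP (p m M k : ℕ) (t : ℝ) : ℝ :=
  (m : ℝ) / (p : ℝ) ^ M
    + ∑ j ∈ Finset.Icc (M + 1) (M + k), ((p : ℝ) - 1) / (2 * (p : ℝ) ^ j)
    + t / (p : ℝ) ^ (M + k)

/-! The function φ_p is self-similar: for a digit r < p and s ∈ [0,1],
φ_p((r + s)/p) = r(r+1)/(2A_p) + (r+1)/A_p · φ_p(s); at s = 1 this still holds because both
sides equal the value at the next digit (or φ_p(1) = 1 when r = p − 1). Peeling off the M digits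
of m gives φ_p((m + t)/p^M) − φ_p((m + t')/p^M) = τ_M (φ_p(t) − φ_p(t')), the case k = 0 with
t' = 1/2. Moreover θ_{k+1}(t) = θ_k(ψ t) with ψ t = ((p−1)/2 + t)/p, and ψ fixes 1/2; the
middle digit (p−1)/2 has weight ((p+1)/2)/A_p = 1/p, so ψ shrinks φ_p-differences from φ_p(1/2)
by exactly 1/p, which is the induction step in k. -/

lemma Int.floor_natCast_mul_sub_mem {n : ℕ} (hn : 0 < n) (y : ℝ) :
    0 ≤ ⌊(n : ℝ) * y⌋ - n * ⌊y⌋ ∧ ⌊(n : ℝ) * y⌋ - n * ⌊y⌋ < n := by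
  have hn' : (0 : ℝ) < n := by exact_mod_cast hn
  have hle : ((n * ⌊y⌋ : ℤ) : ℝ) ≤ n * y := by
    push_cast; exact mul_le_mul_of_nonneg_left (Int.floor_le y) hn'.le
  have hlt : (n : ℝ) * y < ((n * ⌊y⌋ + n : ℤ) : ℝ) := by
    push_cast; nlinarith [Int.lt_floor_add_one y]
  have := Int.le_floor.2 hle
  have := Int.floor_lt.2 hlt
  omega

section Digits

variable {p : ℕ}

lemma Ap_pos (hp : 0 < p) : 0 < Ap p := by
  unfold Ap; positivity

lemma bdig_succ_mem (hp : 0 < p) (x : ℝ) (j : ℕ) :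
    (0 : ℝ) ≤ bdig p x (j + 1) ∧ (bdig p x (j + 1) : ℝ) + 1 ≤ p := by
  have h := Int.floor_natCast_mul_sub_mem hp ((p : ℝ) ^ j * x)
  rw [← mul_assoc, ← pow_succ'] at h
  simp only [bdig, Nat.add_sub_cancel]
  constructor
  · exact_mod_cast h.1
  · exact_mod_cast h.2

lemma bdig_div_one (hp : 0 < p) {r : ℕ} (hr : r < p) {s : ℝ} (hs : s ∈ Set.Ico 0 1) :
    bdig p ((r + s) / p) 1 = r := by
  have hp' : (0 : ℝ) < p := by exact_mod_cast hp
  have hrp : (r : ℝ) + 1 ≤ p := by exact_mod_cast hr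
  have hx : ⌊((r : ℝ) + s) / p⌋ = 0 :=
    Int.floor_eq_zero_iff.2 ⟨by positivity [hs.1], by rw [div_lt_one hp']; linarith [hs.2]⟩
  have hpx : (p : ℝ) * ((r + s) / p) = s + (r : ℤ) := by push_cast; field_simp; ring
  rw [bdig, pow_one, Nat.sub_self, pow_zero, one_mul, hx, hpx, Int.floor_add_intCast,
    Int.floor_eq_zero_iff.2 hs]
  ring

lemma bdig_div_add_two (hp : 0 < p) (r : ℕ) (s : ℝ) (j : ℕ) :
    bdig p ((r + s) / p) (j + 2) = bdig p s (j + 1) := by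
  have hp' : (p : ℝ) ≠ 0 := by exact_mod_cast hp.ne'
  have shift : ∀ i : ℕ,
      (p : ℝ) ^ (i + 1) * ((r + s) / p) = p ^ i * s + ((r * p ^ i : ℕ) : ℤ) := by
    intro i; push_cast; field_simp; ring
  simp only [bdig, show j + 2 - 1 = j + 1 by omega, Nat.add_sub_cancel, shift,
    Int.floor_add_intCast]
  push_cast; ring

end Digits

section SelfSimilarity

variable {p : ℕ}

noncomputable def phiTerm (p : ℕ) (x : ℝ) (j : ℕ) : ℝ :=
  ((bdig p x (j + 1) : ℝ) * ∏ i ∈ range (j + 1), ((bdig p x (i + 1) : ℝ) + 1)) / Ap p ^ (j + 1)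

lemma phiP_of_ne_one {x : ℝ} (hx : x ≠ 1) : phiP p x = 1 / 2 * ∑' j, phiTerm p x j :=
  if_neg hx

lemma phiP_one : phiP p 1 = 1 := if_pos rfl

lemma phiP_zero : phiP p 0 = 0 := by
  simp [phiP_of_ne_one, phiTerm, bdig]

lemma summable_phiTerm (hp : 2 ≤ p) (x : ℝ) : Summable (phiTerm p x) := by
  have hp0 : 0 < p := by omega
  have hA := Ap_pos hp0
  have hratio : (p : ℝ) / Ap p < 1 := by
    have : (2 : ℝ) ≤ p := by exact_mod_cast hp
    rw [div_lt_one hA, Ap]; nlinarith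
  have hb := bdig_succ_mem hp0 x
  have hgeom : Summable fun j : ℕ => (p : ℝ) * (p / Ap p) ^ (j + 1) :=
    ((summable_nat_add_iff 1).2 (summable_geometric_of_lt_one (by positivity) hratio)).mul_left _
  refine hgeom.of_nonneg_of_le (fun j => ?_) (fun j => ?_)
  · exact div_nonneg (mul_nonneg (hb j).1 (prod_nonneg fun i _ => by linarith [(hb i).1]))
      (by positivity)
  · have hprod : ∏ i ∈ range (j + 1), ((bdig p x (i + 1) : ℝ) + 1) ≤ (p : ℝ) ^ (j + 1) := by
      simpa using prod_le_prod (s := range (j + 1)) (fun i _ => by linarith [(hb i).1])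
        (fun i _ => (hb i).2)
    calc phiTerm p x j ≤ (p : ℝ) * p ^ (j + 1) / Ap p ^ (j + 1) := by
          rw [phiTerm]
          gcongr
          · exact prod_nonneg fun i _ => by linarith [(hb i).1]
          · linarith [(hb j).2]
      _ = p * (p / Ap p) ^ (j + 1) := by rw [div_pow, mul_div_assoc]

lemma phiP_div_of_lt_one (hp : 2 ≤ p) {r : ℕ} (hr : r < p) {s : ℝ} (hs : s ∈ Set.Ico 0 1) :
    phiP p ((r + s) / p) = r * (r + 1) / 2 / Ap p + (r + 1) / Ap p * phiP p s := by
  have hp0 : 0 < p := by omega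
  have hA := (Ap_pos hp0).ne'
  have hx : ((r : ℝ) + s) / p ≠ 1 := by
    have : (r : ℝ) + 1 ≤ p := by exact_mod_cast hr
    rw [Ne, div_eq_one_iff_eq (by positivity)]; linarith [hs.2]
  have head : phiTerm p ((r + s) / p) 0 = r * (r + 1) / Ap p := by
    simp [phiTerm, bdig_div_one hp0 hr hs]
  have tail : ∀ j, phiTerm p ((r + s) / p) (j + 1) = (r + 1) / Ap p * phiTerm p s j := by
    intro j
    simp only [phiTerm, prod_range_succ' _ (j + 1), bdig_div_add_two hp0, zero_add,
      bdig_div_one hp0 hr hs, Int.cast_natCast]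
    field_simp
    ring
  rw [phiP_of_ne_one hx, phiP_of_ne_one hs.2.ne, (summable_phiTerm hp _).tsum_eq_zero_add,
    head, tsum_congr tail, tsum_mul_left]
  ring

lemma phiP_div (hp : 2 ≤ p) {r : ℕ} (hr : r < p) {s : ℝ} (hs : s ∈ Set.Icc 0 1) :
    phiP p ((r + s) / p) = r * (r + 1) / 2 / Ap p + (r + 1) / Ap p * phiP p s := by
  rcases hs.2.lt_or_eq with hs1 | rfl
  · exact phiP_div_of_lt_one hp hr ⟨hs.1, hs1⟩
  have hA := (Ap_pos (show 0 < p by omega)).ne'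
  rw [phiP_one]
  rcases (Nat.succ_le_of_lt hr).lt_or_eq with hr1 | hr1
  · have := phiP_div_of_lt_one hp hr1 (s := 0) ⟨le_rfl, one_pos⟩
    rw [phiP_zero, mul_zero, add_zero, add_zero] at this
    push_cast at this
    rw [this]
    field_simp
    ring
  · have hr1' : (r : ℝ) + 1 = p := by exact_mod_cast hr1
    rw [hr1', div_self (by positivity), phiP_one, show (r : ℝ) = p - 1 by linarith, Ap]
    field_simp
    ring

lemma phiP_div_sub_phiP_div (hp : 2 ≤ p) {r : ℕ} (hr : r < p) {t t' : ℝ}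
    (ht : t ∈ Set.Icc 0 1) (ht' : t' ∈ Set.Icc 0 1) :
    phiP p ((r + t) / p) - phiP p ((r + t') / p) = (r + 1) / Ap p * (phiP p t - phiP p t') := by
  rw [phiP_div hp hr ht, phiP_div hp hr ht']
  ring

end SelfSimilarity

section Magnification

variable {p : ℕ}

lemma tauM_zero (n : ℕ) : tauM p n 0 = 1 := by
  simp [tauM]

lemma adig_succ {n N i : ℕ} (hi : i ≤ N) : adig p n (N + 1) i = adig p (n / p) N i := by
  rw [adig, adig, Nat.div_div_eq_div_mul, ← pow_succ', Nat.sub_add_comm hi]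

lemma tauM_succ (n N : ℕ) : tauM p n (N + 1) = ((n % p : ℕ) + 1) / Ap p * tauM p (n / p) N := by
  rw [tauM, tauM, prod_Icc_succ_top (by omega), pow_succ,
    prod_congr rfl fun i hi => by rw [adig_succ (mem_Icc.1 hi).2]]
  simp only [adig, Nat.sub_self, pow_zero, Nat.div_one]
  ring

lemma phiP_sub_phiP_of_lt_pow (hp : 2 ≤ p) (N : ℕ) {n : ℕ} (hn : n < p ^ N) {t t' : ℝ}
    (ht : t ∈ Set.Icc 0 1) (ht' : t' ∈ Set.Icc 0 1) :
    phiP p ((n + t) / p ^ N) - phiP p ((n + t') / p ^ N) =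
      tauM p n N * (phiP p t - phiP p t') := by
  induction N generalizing n t t' with
  | zero =>
    obtain rfl : n = 0 := by simpa using hn
    simp [tauM_zero]
  | succ N ih =>
    have hp0 : 0 < p := by omega
    have hr : n % p < p := Nat.mod_lt n hp0
    have hq : n / p < p ^ N := Nat.div_lt_of_lt_mul (by rwa [← pow_succ'])
    have digit_mem : ∀ s ∈ Set.Icc (0 : ℝ) 1, ((n % p : ℕ) + s) / p ∈ Set.Icc (0 : ℝ) 1 := by
      intro s hs
      have : ((n % p : ℕ) : ℝ) + 1 ≤ p := by exact_mod_cast hr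
      exact ⟨by positivity [hs.1], by rw [div_le_one (by positivity)]; linarith [hs.2]⟩
    have split : ∀ s : ℝ,
        (n + s) / p ^ (N + 1) = ((n / p : ℕ) + ((n % p : ℕ) + s) / p) / p ^ N := by
      intro s
      conv_lhs => rw [← Nat.div_add_mod n p]
      push_cast
      field_simp
      ring
    rw [split, split, ih hq (digit_mem t ht) (digit_mem t' ht'),
      phiP_div_sub_phiP_div hp hr ht ht', tauM_succ]
    ring

lemma thetaP_zero (m M : ℕ) (t : ℝ) : thetaP p m M 0 t = (m + t) / p ^ M := by
  simp [thetaP, add_div]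

lemma thetaP_succ (hp : 0 < p) (m M k : ℕ) (t : ℝ) :
    thetaP p m M (k + 1) t = thetaP p m M k ((((p : ℝ) - 1) / 2 + t) / p) := by
  rw [thetaP, thetaP, ← add_assoc M k 1, sum_Icc_succ_top (by omega), pow_succ]
  field_simp
  ring

lemma phiP_sub_phiP_half_of_odd (hp : 2 ≤ p) (hodd : Odd p) {t : ℝ} (ht : t ∈ Set.Icc 0 1) :
    phiP p ((((p : ℝ) - 1) / 2 + t) / p) - phiP p (1 / 2) = (phiP p t - phiP p (1 / 2)) / p := by
  obtain ⟨w, rfl⟩ := hodd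
  have hw : ((((2 * w + 1 : ℕ) : ℝ) - 1) / 2) = (w : ℕ) := by push_cast; ring
  have half : (1 / 2 : ℝ) = (w + 1 / 2) / (2 * w + 1 : ℕ) := by push_cast; field_simp
  have step := phiP_div_sub_phiP_div hp (r := w) (by omega) ht (by norm_num : (1 / 2 : ℝ) ∈ _)
  rw [← half] at step
  rw [hw, step, Ap]
  push_cast
  field_simp
  ring

end Magnification

theorem magnifying_phi_general (p : ℕ) (hp : p.Prime) (hodd : Odd p) (M m : ℕ)
    (hm2 : m < p ^ M) :
    ∀ k : ℕ, ∀ t ∈ Set.Icc (0 : ℝ) 1,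
      (p : ℝ) ^ k * (phiP p (thetaP p m M k t) - phiP p (muP p m M)) =
        tauM p m M * (phiP p t - phiP p (1 / 2)) := by
  have hp2 := hp.two_le
  have half_mem : (1 / 2 : ℝ) ∈ Set.Icc 0 1 := by norm_num
  intro k
  induction k with
  | zero =>
    intro t ht
    rw [pow_zero, one_mul, thetaP_zero, muP]
    exact phiP_sub_phiP_of_lt_pow hp2 M hm2 ht half_mem
  | succ k ih =>
    intro t ht
    have hψ : (((p : ℝ) - 1) / 2 + t) / p ∈ Set.Icc (0 : ℝ) 1 := by
      have : (2 : ℝ) ≤ p := by exact_mod_cast hp2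
      exact ⟨div_nonneg (by linarith [ht.1]) (by positivity),
        by rw [div_le_one (by positivity)]; linarith [ht.2]⟩
    rw [thetaP_succ hp.pos, pow_succ', mul_assoc, ih _ hψ, phiP_sub_phiP_half_of_odd hp2 hodd ht]
    field_simp

/-- For an odd prime `p`, `M ≥ 1`, `1 ≤ m < p^M`, every `k ≥ 0` and `t ∈ [0,1]`:
`p^k (φ_p(θ_k(t)) − φ_p(μ)) = τ_M (φ_p(t) − φ_p(1/2))`. -/
theorem magnifying_phi (p : ℕ) (hp : p.Prime) (hodd : Odd p) (M m : ℕ)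
    (hM : 1 ≤ M) (hm1 : 1 ≤ m) (hm2 : m < p ^ M) :
    ∀ k : ℕ, ∀ t ∈ Set.Icc (0 : ℝ) 1,
      (p : ℝ) ^ k * (phiP p (thetaP p m M k t) - phiP p (muP p m M)) =
        tauM p m M * (phiP p t - phiP p (1 / 2)) :=
  magnifying_phi_general p hp hodd M m hm2
end

section
/- Let p ≥ 2 be an integer and γ_0, …, γ_{p−1} > 0 real numbers with A := ∑_{j=0}^{p−1} γ_j. Then there exists a unique continuous strictly increasing function φ : [0,1] → ℝ with φ(0) = 0 and φ(1) = 1 such that for each j = 0, 1, …, p−1 and every t with j/p ≤ t ≤ (j+1)/p, φ(t) = (γ_{p−j−1}/A)·φ(pt − j) + (∑_{p−j≤i<p} γ_i)/A. Moreover, this φ satisfies the explicit formula φ(∑_{j≥1} b_j p^{−j}) = ∑_{j≥1} A^{−j} · (∑_{p−b_j≤i<p} γ_i) · ∏_{1≤i<j} γ_{p−1−b_i} for any sequence of digits b_j ∈ {0, 1, …, p−1}. -/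
/-!
`φ` is the fixed point of the operator `selfSimilarOp`, which places a copy of a function on each
piece `[j/p, (j+1)/p]` via the affine map `y ↦ slope j * y + offset j`. All slopes are `< 1`, so
the iterates of `id` converge uniformly, and monotonicity and the values at `0` and `1` pass to the
limit.

Unwinding the functional equation along a base-`p` expansion `t = Real.ofDigits d` expresses
`φ t` as the series `weightedOfDigits p γ d`, for every self-similar `φ` with values in `[0,1]`.
Since `Real.ofDigits` maps the compact Cantor space `ℕ → Fin p` onto `[0,1]`, this gives uniqueness
and continuity at once. Strict monotonicity holds because the increment of `φ` over a `p`-adic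
interval of level `n` is a product of `n` positive slopes.
-/

open Finset Filter Topology

namespace PAry

theorem prod_range_le_pow {a : ℕ → ℝ} {ρ : ℝ} (ha : ∀ i, 0 ≤ a i ∧ a i ≤ ρ) (n : ℕ) :
    ∏ i ∈ range n, a i ≤ ρ ^ n :=
  (prod_le_prod (fun i _ => (ha i).1) fun i _ => (ha i).2).trans_eq (by simp)

theorem hasSum_of_forall_eq_mul_add {a c v : ℕ → ℝ} {ρ M : ℝ} (hρ : ρ < 1)
    (ha : ∀ n, 0 ≤ a n ∧ a n ≤ ρ) (hc : ∀ n, 0 ≤ c n) (hv : ∀ n, 0 ≤ v n ∧ v n ≤ M)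
    (h : ∀ n, v n = a n * v (n + 1) + c n) :
    HasSum (fun j => c j * ∏ i ∈ range j, a i) (v 0) := by
  have hpartial : ∀ n, v 0 =
      ∑ j ∈ range n, c j * ∏ i ∈ range j, a i + (∏ i ∈ range n, a i) * v n := by
    intro n
    induction n with
    | zero => simp
    | succ n ih => rw [ih, h n, sum_range_succ, prod_range_succ]; ring
  have hprod : ∀ n, 0 ≤ ∏ i ∈ range n, a i := fun n => prod_nonneg fun i _ => (ha i).1
  have hρ₀ : 0 ≤ ρ := (ha 0).1.trans (ha 0).2
  have hbound : Tendsto (fun n => ρ ^ n * M) atTop (𝓝 0) := by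
    simpa using (tendsto_pow_atTop_nhds_zero_of_lt_one hρ₀ hρ).mul_const M
  have htail : Tendsto (fun n => (∏ i ∈ range n, a i) * v n) atTop (𝓝 0) := by
    refine squeeze_zero (fun n => mul_nonneg (hprod n) (hv n).1) (fun n => ?_) hbound
    exact mul_le_mul (prod_range_le_pow ha n) (hv n).2 (hv n).1 (pow_nonneg hρ₀ n)
  rw [hasSum_iff_tendsto_nat_of_nonneg fun j => mul_nonneg (hc j) (hprod j)]
  have := (tendsto_const_nhds (x := v 0)).sub htail
  rw [sub_zero] at this
  exact this.congr fun n => by rw [hpartial n, add_sub_cancel_right]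

theorem ofDigits_eq_add_div {p : ℕ} (d : ℕ → Fin p) :
    Real.ofDigits d = (d 0 + Real.ofDigits fun i => d (i + 1)) / p := by
  rw [Real.ofDigits_eq_sum_add_ofDigits d 1]
  simp [Real.ofDigitsTerm]
  ring

theorem strictMonoOn_of_lt_grid {p : ℕ} (hp : 1 < p) {φ : ℝ → ℝ}
    (hmono : MonotoneOn φ (Set.Icc 0 1))
    (hgrid : ∀ n, ∀ k < p ^ n, φ (k / p ^ n) < φ ((k + 1) / p ^ n)) :
    StrictMonoOn φ (Set.Icc 0 1) := by
  intro s hs t ht hst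
  obtain ⟨n, hn⟩ := pow_unbounded_of_one_lt (2 / (t - s)) (by exact_mod_cast hp : (1 : ℝ) < p)
  have hpn : (0 : ℝ) < p ^ n := by positivity
  rw [div_lt_iff₀ (sub_pos.2 hst)] at hn
  set k := ⌈s * p ^ n⌉₊
  have hsk : s ≤ k / p ^ n := (le_div_iff₀ hpn).2 (Nat.le_ceil _)
  have hkt : (k + 1) / p ^ n ≤ t := by
    rw [div_le_iff₀ hpn]
    nlinarith [Nat.ceil_lt_add_one (mul_nonneg hs.1 hpn.le)]
  have hkn : k < p ^ n := by
    have : (k + 1 : ℝ) ≤ p ^ n := (div_le_one hpn).1 (hkt.trans ht.2)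
    exact_mod_cast (lt_add_one (k : ℝ)).trans_le this
  have hk₀ : (k : ℝ) / p ^ n ≤ (k + 1) / p ^ n := by gcongr; linarith
  calc φ s ≤ φ (k / p ^ n) := hmono hs ⟨hs.1.trans hsk, (hk₀.trans hkt).trans ht.2⟩ hsk
    _ < φ ((k + 1) / p ^ n) := hgrid n k hkn
    _ ≤ φ t := hmono ⟨hs.1.trans (hsk.trans hk₀), hkt.trans ht.2⟩ ht hkt

theorem continuousOn_of_continuous_comp_ofDigits {p : ℕ} (hp : 1 < p) {f : ℝ → ℝ}
    (hf : Continuous fun d : ℕ → Fin p => f (Real.ofDigits d)) :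
    ContinuousOn f (Set.Icc 0 1) := by
  -- `Real.ofDigits` is a closed map, its domain being compact.
  refine continuousOn_iff_isClosed.2 fun F hF =>
    ⟨Real.ofDigits '' ((fun d : ℕ → Fin p => f (Real.ofDigits d)) ⁻¹' F), ?_, ?_⟩
  · exact ((hF.preimage hf).isCompact.image Real.continuous_ofDigits).isClosed
  ext x
  constructor
  · rintro ⟨hxF, hx⟩
    obtain ⟨d, -, rfl⟩ := Real.ofDigits_SurjOn hp hx
    exact ⟨⟨d, hxF, rfl⟩, hx⟩
  · rintro ⟨⟨d, hd, rfl⟩, hx⟩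
    exact ⟨hd, hx⟩

variable {p : ℕ} {γ : ℕ → ℝ}

noncomputable def slope (p : ℕ) (γ : ℕ → ℝ) (j : ℕ) : ℝ :=
  γ (p - j - 1) / ∑ i ∈ range p, γ i

noncomputable def offset (p : ℕ) (γ : ℕ → ℝ) (j : ℕ) : ℝ :=
  (∑ i ∈ Ico (p - j) p, γ i) / ∑ i ∈ range p, γ i

def IsSelfSimilar (p : ℕ) (γ : ℕ → ℝ) (φ : ℝ → ℝ) : Prop :=
  ∀ j < p, ∀ t : ℝ, (j : ℝ) / p ≤ t → t ≤ ((j : ℝ) + 1) / p →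
    φ t = slope p γ j * φ (p * t - j) + offset p γ j

theorem offset_zero : offset p γ 0 = 0 := by simp [offset]

theorem offset_succ {j : ℕ} (hj : j < p) : offset p γ (j + 1) = slope p γ j + offset p γ j := by
  rw [offset, offset, slope, ← add_div, Nat.sub_sub,
    sum_eq_sum_Ico_succ_bot (by omega : p - (j + 1) < p), show p - (j + 1) + 1 = p - j by omega]

-- The `min` puts `t = 1` into the last piece.
noncomputable def pieceIndex (p : ℕ) (t : ℝ) : ℕ := min ⌊p * t⌋₊ (p - 1)

theorem pieceIndex_lt (hp : 0 < p) (t : ℝ) : pieceIndex p t < p := by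
  have := min_le_right ⌊p * t⌋₊ (p - 1); unfold pieceIndex; omega

theorem pieceIndex_mono : Monotone (pieceIndex p) := fun s t hst =>
  min_le_min_right _ (Nat.floor_le_floor (by gcongr))

theorem pieceIndex_zero : pieceIndex p 0 = 0 := by simp [pieceIndex]

theorem pieceIndex_one : pieceIndex p 1 = p - 1 := by simp [pieceIndex]

theorem pieceIndex_eq {j : ℕ} {t : ℝ} (hj : j < p) (h₁ : j ≤ p * t) (h₂ : p * t < j + 1) :
    pieceIndex p t = j := by
  rw [pieceIndex, (Nat.floor_eq_iff ((Nat.cast_nonneg j).trans h₁)).2 ⟨h₁, h₂⟩]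
  omega

theorem sub_pieceIndex_mem_Icc (hp : 0 < p) {t : ℝ} (ht : t ∈ Set.Icc 0 1) :
    p * t - pieceIndex p t ∈ Set.Icc 0 1 := by
  have hpt : 0 ≤ (p : ℝ) * t := mul_nonneg p.cast_nonneg ht.1
  have hle : (pieceIndex p t : ℝ) ≤ p * t :=
    (Nat.cast_le.2 (min_le_left _ _)).trans (Nat.floor_le hpt)
  constructor
  · linarith
  rcases le_total ⌊(p : ℝ) * t⌋₊ (p - 1) with h | h
  · rw [pieceIndex, min_eq_left h]
    linarith [Nat.lt_floor_add_one ((p : ℝ) * t)]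
  · rw [pieceIndex, min_eq_right h, Nat.cast_pred hp]
    linarith [mul_le_of_le_one_right p.cast_nonneg ht.2]

noncomputable def selfSimilarOp (p : ℕ) (γ : ℕ → ℝ) (f : ℝ → ℝ) (t : ℝ) : ℝ :=
  slope p γ (pieceIndex p t) * f (p * t - pieceIndex p t) + offset p γ (pieceIndex p t)

noncomputable def selfSimilarFun (p : ℕ) (γ : ℕ → ℝ) (t : ℝ) : ℝ :=
  limUnder atTop fun n => (selfSimilarOp p γ)^[n] id t

noncomputable def weightedOfDigits (p : ℕ) (γ : ℕ → ℝ) (d : ℕ → Fin p) : ℝ :=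
  ∑' j, offset p γ (d j) * ∏ i ∈ range j, slope p γ (d i)

structure IsNormalizedMonotone (f : ℝ → ℝ) : Prop where
  monotoneOn : MonotoneOn f (Set.Icc 0 1)
  map_zero : f 0 = 0
  map_one : f 1 = 1

theorem IsNormalizedMonotone.mapsTo {f : ℝ → ℝ} (hf : IsNormalizedMonotone f) :
    Set.MapsTo f (Set.Icc 0 1) (Set.Icc 0 1) := fun _ ht =>
  ⟨hf.map_zero ▸ hf.monotoneOn ⟨le_rfl, zero_le_one⟩ ht ht.1,
    hf.map_one ▸ hf.monotoneOn ht ⟨zero_le_one, le_rfl⟩ ht.2⟩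

theorem IsNormalizedMonotone.of_tendsto {F : ℕ → ℝ → ℝ} {f : ℝ → ℝ}
    (hF : ∀ n, IsNormalizedMonotone (F n))
    (hlim : ∀ t ∈ Set.Icc (0 : ℝ) 1, Tendsto (fun n => F n t) atTop (𝓝 (f t))) :
    IsNormalizedMonotone f where
  monotoneOn s hs t ht hst :=
    le_of_tendsto_of_tendsto' (hlim s hs) (hlim t ht) fun n => (hF n).monotoneOn hs ht hst
  map_zero := tendsto_nhds_unique (hlim 0 ⟨le_rfl, zero_le_one⟩) (by simp [(hF _).map_zero])
  map_one := tendsto_nhds_unique (hlim 1 ⟨zero_le_one, le_rfl⟩) (by simp [(hF _).map_one])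

theorem IsSelfSimilar.apply_add_div {φ : ℝ → ℝ} (hφ : IsSelfSimilar p γ φ) {j : ℕ} (hj : j < p)
    {x : ℝ} (hx : x ∈ Set.Icc 0 1) : φ ((j + x) / p) = slope p γ j * φ x + offset p γ j := by
  have hp : (0 : ℝ) < p := by exact_mod_cast (show 0 < p by omega)
  have := hφ j hj ((j + x) / p) (by gcongr; linarith [hx.1]) (by gcongr; exact hx.2)
  rwa [mul_div_cancel₀ _ hp.ne', add_sub_cancel_left] at this

theorem ofDigits_eq_tsum {b : ℕ → ℕ} (hb : ∀ j, b j < p) :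
    Real.ofDigits (fun j => (⟨b j, hb j⟩ : Fin p)) = ∑' j, (b j : ℝ) / (p : ℝ) ^ (j + 1) := by
  simp [Real.ofDigits, Real.ofDigitsTerm, div_eq_mul_inv]

theorem offset_mul_prod_slope (b : ℕ → ℕ) (j : ℕ) :
    offset p γ (b j) * ∏ i ∈ range j, slope p γ (b i) =
      (∑ i ∈ Ico (p - b j) p, γ i) * (∏ i ∈ range j, γ (p - 1 - b i)) /
        (∑ i ∈ range p, γ i) ^ (j + 1) := by
  simp only [offset, slope, prod_div_distrib, prod_const, card_range, Nat.sub_right_comm _ _ 1]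
  ring

section

variable (hγ : ∀ j < p, 0 < γ j)
include hγ

theorem sum_weights_pos (hp : 0 < p) : 0 < ∑ i ∈ range p, γ i :=
  sum_pos (fun i hi => hγ i (mem_range.1 hi)) (nonempty_range_iff.2 hp.ne')

theorem slope_pos {j : ℕ} (hj : j < p) : 0 < slope p γ j :=
  div_pos (hγ _ (by omega)) (sum_weights_pos hγ (by omega))

theorem slope_lt_one (hp : 2 ≤ p) {j : ℕ} (hj : j < p) : slope p γ j < 1 := by
  rw [slope, div_lt_one (sum_weights_pos hγ (by omega))]
  obtain ⟨k, hk, hkj⟩ : ∃ k < p, k ≠ p - j - 1 :=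
    ⟨if j = 0 then 0 else p - 1, by split_ifs <;> omega⟩
  exact single_lt_sum hkj (mem_range.2 (by omega)) (mem_range.2 hk) (hγ k hk)
    fun i hi _ => (hγ i (mem_range.1 hi)).le

theorem exists_slope_le (hp : 2 ≤ p) : ∃ ρ < 1, ∀ j < p, slope p γ j ≤ ρ := by
  have hne : (range p).Nonempty := nonempty_range_iff.2 (by omega)
  refine ⟨(range p).sup' hne (slope p γ), ?_, fun j hj => le_sup' _ (mem_range.2 hj)⟩
  exact (sup'_lt_iff hne).2 fun j hj => slope_lt_one hγ hp (mem_range.1 hj)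

theorem offset_mono : Monotone (offset p γ) := by
  intro j k hjk
  refine div_le_div_of_nonneg_right ?_ (sum_nonneg fun i hi => (hγ i (mem_range.1 hi)).le)
  refine sum_le_sum_of_subset_of_nonneg (Ico_subset_Ico (by omega) le_rfl) fun i hi _ => ?_
  exact (hγ i (mem_Ico.1 hi).2).le

theorem offset_self (hp : 0 < p) : offset p γ p = 1 := by
  rw [offset, Nat.sub_self, ← range_eq_Ico, div_self (sum_weights_pos hγ hp).ne']

theorem offset_mem_Icc {j : ℕ} (hj : j ≤ p) : offset p γ j ∈ Set.Icc 0 1 := by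
  rcases p.eq_zero_or_pos with rfl | hp
  · simp [offset]
  exact ⟨offset_zero (γ := γ) ▸ offset_mono hγ j.zero_le, offset_self hγ hp ▸ offset_mono hγ hj⟩

theorem selfSimilarOp_mem_Icc (hp : 0 < p) {f : ℝ → ℝ}
    (hf : Set.MapsTo f (Set.Icc 0 1) (Set.Icc 0 1)) {t : ℝ} (ht : t ∈ Set.Icc 0 1) :
    selfSimilarOp p γ f t ∈
      Set.Icc (offset p γ (pieceIndex p t)) (offset p γ (pieceIndex p t + 1)) := by
  have hj := pieceIndex_lt hp t
  have hu := hf (sub_pieceIndex_mem_Icc hp ht)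
  have hs := slope_pos hγ hj
  rw [selfSimilarOp, offset_succ hj]
  constructor <;> nlinarith [hu.1, hu.2]

theorem IsNormalizedMonotone.selfSimilarOp (hp : 0 < p) {f : ℝ → ℝ}
    (hf : IsNormalizedMonotone f) : IsNormalizedMonotone (selfSimilarOp p γ f) where
  monotoneOn s hs t ht hst := by
    rcases (pieceIndex_mono hst).eq_or_lt with heq | hlt
    · have hu := sub_pieceIndex_mem_Icc hp hs
      have hv := sub_pieceIndex_mem_Icc hp ht
      rw [heq] at hu
      have := hf.monotoneOn hu hv (by gcongr)
      have := slope_pos hγ (pieceIndex_lt hp t)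
      rw [PAry.selfSimilarOp, PAry.selfSimilarOp, heq]
      gcongr
    · calc PAry.selfSimilarOp p γ f s ≤ offset p γ (pieceIndex p s + 1) :=
            (selfSimilarOp_mem_Icc hγ hp hf.mapsTo hs).2
        _ ≤ offset p γ (pieceIndex p t) := offset_mono hγ hlt
        _ ≤ PAry.selfSimilarOp p γ f t := (selfSimilarOp_mem_Icc hγ hp hf.mapsTo ht).1
  map_zero := by simp [PAry.selfSimilarOp, pieceIndex_zero, hf.map_zero, offset_zero]
  map_one := by
    rw [PAry.selfSimilarOp, pieceIndex_one, Nat.cast_pred hp, mul_one, sub_sub_cancel, hf.map_one,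
      mul_one, ← offset_succ (by omega), Nat.sub_add_cancel hp, offset_self hγ hp]

theorem abs_selfSimilarOp_sub_le (hp : 0 < p) {ρ : ℝ} (hρ : ∀ j < p, slope p γ j ≤ ρ)
    {f g : ℝ → ℝ} {δ : ℝ} (hfg : ∀ u ∈ Set.Icc (0 : ℝ) 1, |f u - g u| ≤ δ)
    {t : ℝ} (ht : t ∈ Set.Icc 0 1) :
    |selfSimilarOp p γ f t - selfSimilarOp p γ g t| ≤ ρ * δ := by
  have hj := pieceIndex_lt hp t
  have hfg' := hfg _ (sub_pieceIndex_mem_Icc hp ht)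
  rw [selfSimilarOp, selfSimilarOp, add_sub_add_right_eq_sub, ← mul_sub, abs_mul,
    abs_of_pos (slope_pos hγ hj)]
  exact mul_le_mul (hρ _ hj) hfg' (abs_nonneg _) ((slope_pos hγ hj).le.trans (hρ _ hj))

theorem isNormalizedMonotone_iterate (hp : 0 < p) (n : ℕ) :
    IsNormalizedMonotone ((selfSimilarOp p γ)^[n] id) := by
  induction n with
  | zero => exact ⟨monotoneOn_id, rfl, rfl⟩
  | succ n ih => rw [Function.iterate_succ_apply']; exact ih.selfSimilarOp hγ hp

theorem abs_iterate_succ_sub_le (hp : 0 < p) {ρ : ℝ} (hρ : ∀ j < p, slope p γ j ≤ ρ) (n : ℕ)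
    {t : ℝ} (ht : t ∈ Set.Icc 0 1) :
    |(selfSimilarOp p γ)^[n + 1] id t - (selfSimilarOp p γ)^[n] id t| ≤ ρ ^ n := by
  induction n generalizing t with
  | zero =>
    have := (isNormalizedMonotone_iterate hγ hp 1).mapsTo ht
    simpa using abs_sub_le_of_le_of_le this.1 this.2 ht.1 ht.2
  | succ n ih =>
    have := abs_selfSimilarOp_sub_le hγ hp hρ (f := (selfSimilarOp p γ)^[n + 1] id)
      (g := (selfSimilarOp p γ)^[n] id) (fun _ hu => ih hu) ht
    rwa [← Function.iterate_succ_apply' (selfSimilarOp p γ) (n + 1),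
      ← Function.iterate_succ_apply' (selfSimilarOp p γ) n,
      ← pow_succ'] at this

theorem tendsto_iterate_selfSimilarFun (hp : 2 ≤ p) {t : ℝ} (ht : t ∈ Set.Icc 0 1) :
    Tendsto (fun n => (selfSimilarOp p γ)^[n] id t) atTop (𝓝 (selfSimilarFun p γ t)) := by
  obtain ⟨ρ, hρ₁, hρ⟩ := exists_slope_le hγ hp
  refine (cauchySeq_of_le_geometric ρ 1 hρ₁ fun n => ?_).tendsto_limUnder
  rw [dist_comm, Real.dist_eq, one_mul]
  exact abs_iterate_succ_sub_le hγ (by omega) hρ n ht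

theorem isNormalizedMonotone_selfSimilarFun (hp : 2 ≤ p) :
    IsNormalizedMonotone (selfSimilarFun p γ) :=
  .of_tendsto (isNormalizedMonotone_iterate hγ (by omega : 0 < p))
    fun _ ht => tendsto_iterate_selfSimilarFun hγ hp ht

theorem selfSimilarOp_selfSimilarFun (hp : 2 ≤ p) {t : ℝ} (ht : t ∈ Set.Icc 0 1) :
    selfSimilarOp p γ (selfSimilarFun p γ) t = selfSimilarFun p γ t := by
  have hu := sub_pieceIndex_mem_Icc (by omega : 0 < p) ht
  refine tendsto_nhds_unique ?_ ((tendsto_iterate_selfSimilarFun hγ hp ht).comp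
    (tendsto_add_atTop_nat 1))
  simp only [Function.comp_def, Function.iterate_succ_apply']
  exact ((tendsto_iterate_selfSimilarFun hγ hp hu).const_mul _).add_const _

theorem isSelfSimilar_of_selfSimilarOp_eq {f : ℝ → ℝ} (h0 : f 0 = 0) (h1 : f 1 = 1)
    (hfix : ∀ t ∈ Set.Icc (0 : ℝ) 1, selfSimilarOp p γ f t = f t) : IsSelfSimilar p γ f := by
  intro j hj t ht₁ ht₂
  have hp : (0 : ℝ) < p := by exact_mod_cast (show 0 < p by omega)
  rw [div_le_iff₀' hp] at ht₁
  rw [le_div_iff₀' hp] at ht₂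
  have ht : t ∈ Set.Icc 0 1 := ⟨by nlinarith [j.cast_nonneg (α := ℝ)], by
    nlinarith [show (j : ℝ) + 1 ≤ p by exact_mod_cast hj]⟩
  rcases ht₂.lt_or_eq with ht₂ | ht₂
  · rw [← hfix t ht, selfSimilarOp, pieceIndex_eq hj ht₁ ht₂]
  rw [show (p : ℝ) * t - j = 1 by linarith, h1, mul_one, ← offset_succ hj]
  rcases (Nat.succ_le_of_lt hj).lt_or_eq with hj' | hj'
  · have hidx : pieceIndex p t = j + 1 := pieceIndex_eq hj' (by push_cast; linarith)
      (by push_cast; linarith)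
    rw [← hfix t ht, selfSimilarOp, hidx]
    push_cast
    rw [show (p : ℝ) * t - (j + 1) = 0 by linarith, h0, mul_zero, zero_add]
  · have hpj : (p : ℝ) = j + 1 := by exact_mod_cast hj'.symm
    have : t = 1 := mul_left_cancel₀ hp.ne' (by linarith)
    rw [this, h1, ← Nat.succ_eq_add_one, hj', offset_self hγ (by omega)]

theorem isSelfSimilar_selfSimilarFun (hp : 2 ≤ p) : IsSelfSimilar p γ (selfSimilarFun p γ) :=
  have hφ := isNormalizedMonotone_selfSimilarFun hγ hp
  isSelfSimilar_of_selfSimilarOp_eq hγ hφ.map_zero hφ.map_one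
    fun _ ht => selfSimilarOp_selfSimilarFun hγ hp ht

theorem IsSelfSimilar.apply_ofDigits (hp : 2 ≤ p) {φ : ℝ → ℝ} (hφ : IsSelfSimilar p γ φ)
    (hmaps : Set.MapsTo φ (Set.Icc 0 1) (Set.Icc 0 1)) (d : ℕ → Fin p) :
    φ (Real.ofDigits d) = weightedOfDigits p γ d := by
  obtain ⟨ρ, hρ₁, hρ⟩ := exists_slope_le hγ hp
  set x : ℕ → ℝ := fun n => Real.ofDigits fun i => d (i + n)
  have hx : ∀ n, x n ∈ Set.Icc 0 1 := fun n => ⟨Real.ofDigits_nonneg _, Real.ofDigits_le_one _⟩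
  have hrec : ∀ n, φ (x n) = slope p γ (d n) * φ (x (n + 1)) + offset p γ (d n) := by
    intro n
    rw [← hφ.apply_add_div (d n).2 (hx (n + 1))]
    simp only [x]
    rw [ofDigits_eq_add_div]
    simp only [zero_add, add_right_comm _ 1 n, add_assoc]
  have hsum := hasSum_of_forall_eq_mul_add hρ₁ (fun n => ⟨(slope_pos hγ (d n).2).le, hρ _ (d n).2⟩)
    (fun n => (offset_mem_Icc hγ (d n).2.le).1) (fun n => hmaps (hx n)) hrec
  have := hsum.tsum_eq
  simp only [x, add_zero] at this
  exact this.symm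

theorem continuous_weightedOfDigits (hp : 2 ≤ p) : Continuous (weightedOfDigits p γ) := by
  obtain ⟨ρ, hρ₁, hρ⟩ := exists_slope_le hγ hp
  have hslope (i : Fin p) : 0 ≤ slope p γ i ∧ slope p γ i ≤ ρ := ⟨(slope_pos hγ i.2).le, hρ _ i.2⟩
  have hρ₀ : 0 ≤ ρ := (hslope ⟨0, by omega⟩).1.trans (hslope ⟨0, by omega⟩).2
  have hcoord (g : Fin p → ℝ) (i : ℕ) : Continuous fun d : ℕ → Fin p => g (d i) :=
    continuous_of_discreteTopology.comp (continuous_apply i)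
  refine continuous_tsum (fun j => (hcoord (fun i => offset p γ i) j).mul
    (continuous_finsetProd _ fun i _ => hcoord (fun i => slope p γ i) i))
    (summable_geometric_of_lt_one hρ₀ hρ₁) fun j d => ?_
  have hoff := offset_mem_Icc hγ (d j).2.le
  rw [Real.norm_eq_abs, abs_of_nonneg (mul_nonneg hoff.1 (prod_nonneg fun i _ => (hslope _).1))]
  exact (mul_le_mul hoff.2 (prod_range_le_pow (fun i => hslope (d i)) j)
    (prod_nonneg fun i _ => (hslope _).1) zero_le_one).trans_eq (one_mul _)

theorem IsSelfSimilar.eqOn (hp : 2 ≤ p) {φ ψ : ℝ → ℝ} (hφ : IsSelfSimilar p γ φ)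
    (hψ : IsSelfSimilar p γ ψ) (hφ₁ : Set.MapsTo φ (Set.Icc 0 1) (Set.Icc 0 1))
    (hψ₁ : Set.MapsTo ψ (Set.Icc 0 1) (Set.Icc 0 1)) : Set.EqOn φ ψ (Set.Icc 0 1) := by
  intro t ht
  obtain ⟨d, -, rfl⟩ := Real.ofDigits_SurjOn (by omega : 1 < p) ht
  rw [hφ.apply_ofDigits hγ hp hφ₁, hψ.apply_ofDigits hγ hp hψ₁]

theorem IsSelfSimilar.apply_lt_apply_grid {φ : ℝ → ℝ} (hφ : IsSelfSimilar p γ φ) (h0 : φ 0 = 0)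
    (h1 : φ 1 = 1) (n : ℕ) : ∀ k < p ^ n, φ (k / p ^ n) < φ ((k + 1) / p ^ n) := by
  induction n with
  | zero =>
    intro k hk
    obtain rfl : k = 0 := by simpa using hk
    simp [h0, h1]
  | succ n ih =>
    intro k hk
    have hp : 0 < p := Nat.pos_of_ne_zero fun h => by simp [h] at hk
    obtain ⟨j, k', hj, hk', rfl⟩ : ∃ j k', j < p ∧ k' < p ^ n ∧ k = p ^ n * j + k' :=
      ⟨k / p ^ n, k % p ^ n, Nat.div_lt_of_lt_mul (by rwa [← pow_succ]),
        Nat.mod_lt k (pow_pos hp n), (Nat.div_add_mod k (p ^ n)).symm⟩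
    have hpn : (0 : ℝ) < p ^ n := by positivity
    have hrescale (m : ℝ) : (p ^ n * j + m) / (p : ℝ) ^ (n + 1) = (j + m / p ^ n) / p := by
      field_simp
      ring
    have hmem : (k' : ℝ) / p ^ n ∈ Set.Icc 0 1 :=
      ⟨by positivity, (div_le_one hpn).2 (by exact_mod_cast hk'.le)⟩
    have hmem' : ((k' : ℝ) + 1) / p ^ n ∈ Set.Icc 0 1 :=
      ⟨by positivity, (div_le_one hpn).2 (by exact_mod_cast hk')⟩
    push_cast
    rw [add_assoc, hrescale, hrescale, hφ.apply_add_div hj hmem, hφ.apply_add_div hj hmem']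
    have := slope_pos hγ hj
    gcongr
    exact ih k' hk'

end

end PAry

open PAry

/-- Lemma A.1 (p-ary self-similar function): for `p ≥ 2` and positive weights
`γ_0, …, γ_{p-1}` with `A = ∑_j γ_j`, there is a unique continuous strictly
increasing `φ : [0,1] → ℝ` with `φ(0) = 0`, `φ(1) = 1` and
`φ(t) = (γ_{p−j−1}/A) φ(pt − j) + (∑_{p−j≤i<p} γ_i)/A` on `[j/p, (j+1)/p]`;
moreover `φ` satisfies the explicit digit formula. -/
theorem pary_selfsimilar (p : ℕ) (hp : 2 ≤ p) (γ : ℕ → ℝ) (hγ : ∀ j < p, 0 < γ j) :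
    ∃ φ : ℝ → ℝ,
      (ContinuousOn φ (Set.Icc 0 1) ∧ StrictMonoOn φ (Set.Icc 0 1) ∧
        φ 0 = 0 ∧ φ 1 = 1 ∧
        (∀ j < p, ∀ t : ℝ, (j : ℝ) / p ≤ t → t ≤ ((j : ℝ) + 1) / p →
          φ t = γ (p - j - 1) / (∑ i ∈ Finset.range p, γ i) * φ (p * t - j)
            + (∑ i ∈ Finset.Ico (p - j) p, γ i) / (∑ i ∈ Finset.range p, γ i))) ∧
      (∀ ψ : ℝ → ℝ,
        (ContinuousOn ψ (Set.Icc 0 1) ∧ StrictMonoOn ψ (Set.Icc 0 1) ∧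
          ψ 0 = 0 ∧ ψ 1 = 1 ∧
          (∀ j < p, ∀ t : ℝ, (j : ℝ) / p ≤ t → t ≤ ((j : ℝ) + 1) / p →
            ψ t = γ (p - j - 1) / (∑ i ∈ Finset.range p, γ i) * ψ (p * t - j)
              + (∑ i ∈ Finset.Ico (p - j) p, γ i) / (∑ i ∈ Finset.range p, γ i))) →
        Set.EqOn φ ψ (Set.Icc 0 1)) ∧
      (∀ b : ℕ → ℕ, (∀ j, b j < p) →
        φ (∑' j : ℕ, (b j : ℝ) / (p : ℝ) ^ (j + 1)) =
          ∑' j : ℕ, (∑ i ∈ Finset.Ico (p - b j) p, γ i) *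
            (∏ i ∈ Finset.range j, γ (p - 1 - b i))
              / (∑ i ∈ Finset.range p, γ i) ^ (j + 1)) := by
  have hφ := isSelfSimilar_selfSimilarFun hγ hp
  have hmono := isNormalizedMonotone_selfSimilarFun hγ hp
  have hdigits := hφ.apply_ofDigits hγ hp hmono.mapsTo
  refine ⟨selfSimilarFun p γ, ⟨?_, ?_, hmono.map_zero, hmono.map_one, hφ⟩, ?_, fun b hb => ?_⟩
  · refine continuousOn_of_continuous_comp_ofDigits (p := p) (by omega) ?_
    simpa only [hdigits] using continuous_weightedOfDigits hγ hp
  · exact strictMonoOn_of_lt_grid (by omega) hmono.monotoneOn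
      (hφ.apply_lt_apply_grid hγ hmono.map_zero hmono.map_one)
  · rintro ψ ⟨-, hψ, hψ0, hψ1, hψφ⟩
    exact hφ.eqOn hγ hp hψφ hmono.mapsTo (IsNormalizedMonotone.mk hψ.monotoneOn hψ0 hψ1).mapsTo
  · rw [← ofDigits_eq_tsum hb, hdigits, weightedOfDigits]
    exact tsum_congr (offset_mul_prod_slope b)
end

section
/- Let p ≥ 2 be an integer, γ_0, …, γ_{p−1} > 0 real numbers, A := ∑_{j=0}^{p−1} γ_j, and let f : ℕ_{≥1} → ℝ satisfy the recurrence f(n) = ∑_{j=0}^{p−1} γ_j · f(⌊(n+j)/p⌋) for all n ≥ p. Extend f to real arguments x ≥ 1 by f(n+t) := (1−φ(t))·f(n) + φ(t)·f(n+1) for integers n ≥ 1 and t ∈ [0,1], where φ : [0,1] → ℝ is the unique continuous strictly increasing function with φ(0) = 0, φ(1) = 1 satisfying φ(t) = (γ_{p−j−1}/A)·φ(pt − j) + (∑_{p−j≤i<p} γ_i)/A for j/p ≤ t ≤ (j+1)/p, j = 0,…,p−1. Then f(x) = A · f(x/p) for all real x ≥ p. -/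
/-!
Write `x = p m + r + t` with `m ≥ 1`, `r < p`, `t ∈ [0, 1]`, so that `x / p = m + (r + t) / p`.
Every `⌊(p m + r + j) / p⌋` is `m` or `m + 1`, so the recurrence expresses both `f (p m + r)` and
`f (p m + r + 1)` as combinations of `f m` and `f (m + 1)`, the weight of `f (m + 1)` being the sum
of the top `r` (resp. `r + 1`) coefficients. Interpolating between them with weight `φ t` gives the
same combination as `A` times the interpolation between `f m` and `f (m + 1)` with weight
`φ ((r + t) / p)`, which is exactly what the functional equation of `φ` on `[r / p, (r + 1) / p]` says.
-/

open Finset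

theorem Nat.mul_add_add_div_eq_of_lt {p m r j : ℕ} (hp : 0 < p) (h : r + j < p) :
    (p * m + r + j) / p = m := by
  rw [add_assoc, Nat.mul_add_div hp, Nat.div_eq_of_lt h, add_zero]

theorem Nat.mul_add_add_div_eq_succ {p m r j : ℕ} (hp : 0 < p) (h₁ : p ≤ r + j)
    (h₂ : r + j < 2 * p) : (p * m + r + j) / p = m + 1 := by
  rw [add_assoc, Nat.mul_add_div hp, Nat.div_eq_of_lt_le (k := 1) (by omega) (by omega)]

theorem recurrence_mul_add {R : Type*} [Semiring R] {p : ℕ} (hp : 0 < p) (γ : ℕ → R)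
    {f : ℕ → R} (hf : ∀ n : ℕ, p ≤ n → f n = ∑ j ∈ range p, γ j * f ((n + j) / p))
    {m r : ℕ} (hm : 1 ≤ m) (hr : r ≤ p) :
    f (p * m + r) = (∑ j ∈ range (p - r), γ j) * f m + (∑ j ∈ Ico (p - r) p, γ j) * f (m + 1) := by
  rw [hf _ (by nlinarith), ← sum_range_add_sum_Ico _ (Nat.sub_le p r), sum_mul, sum_mul]
  congr 1
  · refine sum_congr rfl fun j hj => ?_
    rw [Nat.mul_add_add_div_eq_of_lt hp (by have := mem_range.mp hj; omega)]
  · refine sum_congr rfl fun j hj => ?_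
    obtain ⟨hj₁, hj₂⟩ := mem_Ico.mp hj
    rw [Nat.mul_add_add_div_eq_succ hp (by omega) (by omega)]

theorem sum_Ico_sub_succ_eq_add {M : Type*} [AddCommMonoid M] (γ : ℕ → M) {p r : ℕ} (hr : r < p) :
    ∑ i ∈ Ico (p - (r + 1)) p, γ i = γ (p - (r + 1)) + ∑ i ∈ Ico (p - r) p, γ i := by
  rw [sum_eq_sum_Ico_succ_bot (by omega), show p - (r + 1) + 1 = p - r by omega]

theorem exists_eq_nat_mul_add_nat_add {p : ℕ} (hp : 0 < p) {x : ℝ} (hx : (p : ℝ) ≤ x) :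
    ∃ m r : ℕ, ∃ t ∈ Set.Icc (0 : ℝ) 1, 1 ≤ m ∧ r < p ∧ x = p * m + r + t := by
  have hx₀ : 0 ≤ x := (Nat.cast_nonneg p).trans hx
  refine ⟨⌊x⌋₊ / p, ⌊x⌋₊ % p, x - ⌊x⌋₊, ⟨by linarith [Nat.floor_le hx₀],
    by linarith [Nat.lt_floor_add_one x]⟩, (Nat.one_le_div_iff hp).mpr (Nat.le_floor hx),
    Nat.mod_lt _ hp, ?_⟩
  have h := congrArg (Nat.cast : ℕ → ℝ) (Nat.div_add_mod ⌊x⌋₊ p)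
  push_cast at h
  linarith

theorem fext_self_similar_general (p : ℕ) (hp : 2 ≤ p) (γ : ℕ → ℝ) (hγ : ∀ j < p, 0 < γ j)
    (A : ℝ) (hA : A = ∑ j ∈ Finset.range p, γ j)
    (φ : ℝ → ℝ)
    (hφeq : ∀ j < p, ∀ t : ℝ, (j : ℝ) / p ≤ t → t ≤ ((j : ℝ) + 1) / p →
      φ t = γ (p - j - 1) / A * φ (p * t - j) + (∑ i ∈ Finset.Ico (p - j) p, γ i) / A)
    (f : ℕ → ℝ)
    (hf : ∀ n : ℕ, p ≤ n → f n = ∑ j ∈ Finset.range p, γ j * f ((n + j) / p))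
    (fext : ℝ → ℝ)
    (hfext : ∀ n : ℕ, 1 ≤ n → ∀ t ∈ Set.Icc (0 : ℝ) 1,
      fext ((n : ℝ) + t) = (1 - φ t) * f n + φ t * f (n + 1))
    : ∀ x : ℝ, (p : ℝ) ≤ x → fext x = A * fext (x / p) := by
  intro x hx
  have hp₀ : 0 < p := by omega
  have hpR : (0 : ℝ) < p := by exact_mod_cast hp₀
  have hA₀ : A ≠ 0 := by
    rw [hA]
    exact (sum_pos (fun j hj => hγ j (mem_range.mp hj)) ⟨0, mem_range.mpr hp₀⟩).ne'
  obtain ⟨m, r, t, ⟨ht₀, ht₁⟩, hm, hr, rfl⟩ := exists_eq_nat_mul_add_nat_add hp₀ hx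
  have hrR : (r : ℝ) + 1 ≤ p := by exact_mod_cast hr
  have hs : (p * m + r + t) / p = m + (r + t) / p := by field_simp; ring
  have hφs :
      φ ((r + t) / p) = γ (p - (r + 1)) / A * φ t + (∑ i ∈ Ico (p - r) p, γ i) / A := by
    have := hφeq r hr ((r + t) / p) (by gcongr; linarith) (by gcongr)
    rwa [Nat.sub_sub, show (p : ℝ) * ((r + t) / p) - r = t by field_simp; ring] at this
  have hfx := hfext (p * m + r) (by nlinarith) t ⟨ht₀, ht₁⟩
  have hfxp := hfext m hm ((r + t) / p) ⟨by positivity, (div_le_one hpR).mpr (by linarith)⟩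
  have hsplit := sum_range_add_sum_Ico γ (Nat.sub_le p r)
  have hhead : ∑ j ∈ range (p - r), γ j = ∑ j ∈ range (p - (r + 1)), γ j + γ (p - (r + 1)) := by
    rw [← sum_range_succ, show p - (r + 1) + 1 = p - r by omega]
  push_cast at hfx
  rw [hfx, hs, hfxp, recurrence_mul_add hp₀ γ hf hm hr.le,
    show p * m + r + 1 = p * m + (r + 1) by ring, recurrence_mul_add hp₀ γ hf hm hr,
    sum_Ico_sub_succ_eq_add γ hr, hφs]
  field_simp
  linear_combination f m * hsplit - f m * hA - φ t * f m * hhead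

theorem fext_self_similar (p : ℕ) (hp : 2 ≤ p) (γ : ℕ → ℝ) (hγ : ∀ j < p, 0 < γ j)
    (A : ℝ) (hA : A = ∑ j ∈ Finset.range p, γ j)
    (φ : ℝ → ℝ)
    (hφc : ContinuousOn φ (Set.Icc 0 1)) (hφm : StrictMonoOn φ (Set.Icc 0 1))
    (hφ0 : φ 0 = 0) (hφ1 : φ 1 = 1)
    (hφeq : ∀ j < p, ∀ t : ℝ, (j : ℝ) / p ≤ t → t ≤ ((j : ℝ) + 1) / p →
      φ t = γ (p - j - 1) / A * φ (p * t - j) + (∑ i ∈ Finset.Ico (p - j) p, γ i) / A)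
    (f : ℕ → ℝ)
    (hf : ∀ n : ℕ, p ≤ n → f n = ∑ j ∈ Finset.range p, γ j * f ((n + j) / p))
    (fext : ℝ → ℝ)
    (hfext : ∀ n : ℕ, 1 ≤ n → ∀ t ∈ Set.Icc (0 : ℝ) 1,
      fext ((n : ℝ) + t) = (1 - φ t) * f n + φ t * f (n + 1))
    : ∀ x : ℝ, (p : ℝ) ≤ x → fext x = A * fext (x / p) :=
  fext_self_similar_general p hp γ hγ A hA φ hφeq f hf fext hfext
end
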